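/- arXiv:2602.22126 — 4 statements merged into one kernel-verified Lean document; each statement's English description precedes it below -/
import Mathlib

section
/- Let p be a probability distribution on a finite set of size d, let N ≥ 2, and let x_1, …, x_N be i.i.d. samples from p. Define C = ∑_{1 ≤ a < b ≤ N} 1[x_a = x_b], s_2 = ∑_x p(x)², and s_3 = ∑_x p(x)³. Then Var[C] = (N choose 2)(s_2 − s_2²) + 6 (N choose 3)(s_3 − s_2²). -/
/-- The collision counter: the number of pairs `a < b` with `x a = x b`. -/
def collisionCounter {d N : ℕ} (x : Fin N → Fin d) : ℝ :=
  ∑ a : Fin N, ∑ b : Fin N, if a < b ∧ x a = x b then 1 else 0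

open Finset

namespace CollVar

variable {d N : ℕ}

noncomputable def cind (c : Option (Fin d)) (w : Fin d) : ℝ :=
  c.elim 1 (fun y => if w = y then 1 else 0)

noncomputable def cval (p : Fin d → ℝ) (c : Option (Fin d)) : ℝ := c.elim 1 p

noncomputable def J (a b : Fin N) (x : Fin N → Fin d) : ℝ := if x a = x b then 1 else 0

lemma key (p : Fin d → ℝ) (hsum : ∑ x, p x = 1) (c : Fin N → Option (Fin d)) :
    ∑ x : Fin N → Fin d, (∏ i, p (x i)) * ∏ i, cind (c i) (x i)
      = ∏ i, cval p (c i) := by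
  have h1 : ∀ x : Fin N → Fin d, (∏ i, p (x i)) * ∏ i, cind (c i) (x i)
      = ∏ i, (p (x i) * cind (c i) (x i)) := fun x => (Finset.prod_mul_distrib).symm
  simp_rw [h1]
  rw [← Fintype.prod_sum (fun i w => p w * cind (c i) w)]
  refine Finset.prod_congr rfl fun i _ => ?_
  cases h : c i with
  | none => simpa [cind, cval] using hsum
  | some y => simp [cind, cval, mul_ite, mul_one, mul_zero]

lemma prod_restrict (f : Fin N → ℝ) (s : Finset (Fin N)) (h : ∀ i ∉ s, f i = 1) :
    ∏ i, f i = ∏ i ∈ s, f i :=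
  (Finset.prod_subset (Finset.subset_univ s) (fun i _ hi => h i hi)).symm

lemma Jsymm (a b : Fin N) (x : Fin N → Fin d) : J a b x = J b a x := by
  unfold J
  rcases eq_or_ne (x a) (x b) with h | h
  · rw [if_pos h, if_pos h.symm]
  · rw [if_neg h, if_neg (fun hh => h hh.symm)]

lemma Epair (p : Fin d → ℝ) (hsum : ∑ x, p x = 1) {a b : Fin N} (hab : a ≠ b) :
    ∑ x : Fin N → Fin d, (∏ i, p (x i)) * J a b x = ∑ y, p y ^ 2 := by
  set c : Fin d → Fin N → Option (Fin d) :=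
    fun y i => if i = a then some y else if i = b then some y else none with hc
  have hout : ∀ (y : Fin d) (i : Fin N), i ∉ ({a, b} : Finset (Fin N)) →
      c y i = none := by
    intro y i hi
    simp only [Finset.mem_insert, Finset.mem_singleton, not_or] at hi
    simp [hc, hi.1, hi.2]
  have hind : ∀ (y : Fin d) (x : Fin N → Fin d),
      ∏ i, cind (c y i) (x i)
        = (if x a = y then (1:ℝ) else 0) * (if x b = y then 1 else 0) := by
    intro y x
    rw [prod_restrict _ ({a, b}) (fun i hi => by simp [cind, hout y i hi]),
      Finset.prod_pair hab]
    simp [hc, cind, hab.symm]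
  have hval : ∀ y : Fin d, ∏ i, cval p (c y i) = p y ^ 2 := by
    intro y
    rw [prod_restrict _ ({a, b}) (fun i hi => by simp [cval, hout y i hi]),
      Finset.prod_pair hab]
    simp [hc, cval, hab.symm, sq]
  have hpt : ∀ x : Fin N → Fin d,
      J a b x = ∑ y, ∏ i, cind (c y i) (x i) := by
    intro x
    simp_rw [hind]
    unfold J
    rcases eq_or_ne (x a) (x b) with h | h
    · simp [h, Finset.sum_ite_eq]
    · rw [if_neg h]
      refine (Finset.sum_eq_zero fun y _ => ?_).symm
      rcases eq_or_ne (x a) y with h1 | h1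
      · rw [if_neg (fun h2 : x b = y => h (h1.trans h2.symm)), mul_zero]
      · rw [if_neg h1, zero_mul]
  calc ∑ x : Fin N → Fin d, (∏ i, p (x i)) * J a b x
      = ∑ x : Fin N → Fin d, ∑ y, (∏ i, p (x i)) * ∏ i, cind (c y i) (x i) := by
        refine Finset.sum_congr rfl fun x _ => ?_
        rw [hpt x, Finset.mul_sum]
    _ = ∑ y, ∑ x : Fin N → Fin d, (∏ i, p (x i)) * ∏ i, cind (c y i) (x i) :=
        Finset.sum_comm
    _ = ∑ y, ∏ i, cval p (c y i) := Finset.sum_congr rfl fun y _ => key p hsum (c y)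
    _ = ∑ y, p y ^ 2 := Finset.sum_congr rfl fun y _ => hval y

lemma prod_triple {M : Type*} [CommMonoid M] (f : Fin N → M) {u v w : Fin N}
    (huv : u ≠ v) (huw : u ≠ w) (hvw : v ≠ w) :
    ∏ i ∈ ({u, v, w} : Finset (Fin N)), f i = f u * f v * f w := by
  rw [Finset.prod_insert (by simp [huv, huw]), Finset.prod_pair hvw, mul_assoc]

lemma prod_quad {M : Type*} [CommMonoid M] (f : Fin N → M) {a b c e : Fin N}
    (hab : a ≠ b) (hac : a ≠ c) (hae : a ≠ e) (hbc : b ≠ c) (hbe : b ≠ e) (hce : c ≠ e) :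
    ∏ i ∈ ({a, b, c, e} : Finset (Fin N)), f i = f a * f b * f c * f e := by
  rw [Finset.prod_insert (by simp [hab, hac, hae]),
    Finset.prod_insert (by simp [hbc, hbe]), Finset.prod_pair hce,
    ← mul_assoc, ← mul_assoc]

lemma Etriple (p : Fin d → ℝ) (hsum : ∑ x, p x = 1) {u v w : Fin N}
    (huv : u ≠ v) (huw : u ≠ w) (hvw : v ≠ w) :
    ∑ x : Fin N → Fin d, (∏ i, p (x i)) * (J u v x * J u w x) = ∑ y, p y ^ 3 := by
  set c : Fin d → Fin N → Option (Fin d) :=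
    fun y i => if i = u then some y else if i = v then some y else
      if i = w then some y else none with hc
  have hout : ∀ (y : Fin d) (i : Fin N), i ∉ ({u, v, w} : Finset (Fin N)) →
      c y i = none := by
    intro y i hi
    simp only [Finset.mem_insert, Finset.mem_singleton, not_or] at hi
    simp [hc, hi.1, hi.2.1, hi.2.2]
  have hind : ∀ (y : Fin d) (x : Fin N → Fin d),
      ∏ i, cind (c y i) (x i)
        = (if x u = y then (1:ℝ) else 0) * (if x v = y then 1 else 0) *
          (if x w = y then 1 else 0) := by
    intro y x
    rw [prod_restrict _ ({u, v, w}) (fun i hi => by simp [cind, hout y i hi]),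
      prod_triple _ huv huw hvw]
    simp [hc, cind, huv.symm, huw.symm, hvw.symm]
  have hval : ∀ y : Fin d, ∏ i, cval p (c y i) = p y ^ 3 := by
    intro y
    rw [prod_restrict _ ({u, v, w}) (fun i hi => by simp [cval, hout y i hi]),
      prod_triple _ huv huw hvw]
    simp [hc, cval, huv.symm, huw.symm, hvw.symm]
    ring
  have hpt : ∀ x : Fin N → Fin d,
      J u v x * J u w x = ∑ y, ∏ i, cind (c y i) (x i) := by
    intro x
    simp_rw [hind]
    unfold J
    rcases eq_or_ne (x u) (x v) with h1 | h1
    · rcases eq_or_ne (x u) (x w) with h2 | h2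
      · rw [if_pos h1, if_pos h2, ← h1, ← h2]
        simp [Finset.sum_ite_eq]
      · rw [if_neg h2, mul_zero]
        refine (Finset.sum_eq_zero fun y _ => ?_).symm
        rcases eq_or_ne (x u) y with h3 | h3
        · rw [if_neg (fun h4 : x w = y => h2 (h3.trans h4.symm)), mul_zero]
        · rw [if_neg h3, zero_mul, zero_mul]
    · rw [if_neg h1, zero_mul]
      refine (Finset.sum_eq_zero fun y _ => ?_).symm
      rcases eq_or_ne (x u) y with h3 | h3
      · rw [if_neg (fun h4 : x v = y => h1 (h3.trans h4.symm)), mul_zero, zero_mul]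
      · rw [if_neg h3, zero_mul, zero_mul]
  calc ∑ x : Fin N → Fin d, (∏ i, p (x i)) * (J u v x * J u w x)
      = ∑ x : Fin N → Fin d, ∑ y, (∏ i, p (x i)) * ∏ i, cind (c y i) (x i) := by
        refine Finset.sum_congr rfl fun x _ => ?_
        rw [hpt x, Finset.mul_sum]
    _ = ∑ y, ∑ x : Fin N → Fin d, (∏ i, p (x i)) * ∏ i, cind (c y i) (x i) :=
        Finset.sum_comm
    _ = ∑ y, ∏ i, cval p (c y i) := Finset.sum_congr rfl fun y _ => key p hsum (c y)
    _ = ∑ y, p y ^ 3 := Finset.sum_congr rfl fun y _ => hval y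

lemma pair_pt (x : Fin N → Fin d) (a b : Fin N) :
    J a b x = ∑ y, (if x a = y then (1:ℝ) else 0) * (if x b = y then 1 else 0) := by
  unfold J
  rcases eq_or_ne (x a) (x b) with h | h
  · simp [h, Finset.sum_ite_eq]
  · rw [if_neg h]
    refine (Finset.sum_eq_zero fun y _ => ?_).symm
    rcases eq_or_ne (x a) y with h1 | h1
    · rw [if_neg (fun h2 : x b = y => h (h1.trans h2.symm)), mul_zero]
    · rw [if_neg h1, zero_mul]

lemma Equad (p : Fin d → ℝ) (hsum : ∑ x, p x = 1) {a b c e : Fin N}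
    (hab : a ≠ b) (hac : a ≠ c) (hae : a ≠ e) (hbc : b ≠ c) (hbe : b ≠ e) (hce : c ≠ e) :
    ∑ x : Fin N → Fin d, (∏ i, p (x i)) * (J a b x * J c e x) = (∑ y, p y ^ 2) ^ 2 := by
  set cq : Fin d → Fin d → Fin N → Option (Fin d) :=
    fun y z i => if i = a then some y else if i = b then some y else
      if i = c then some z else if i = e then some z else none with hcq
  have hout : ∀ (y z : Fin d) (i : Fin N), i ∉ ({a, b, c, e} : Finset (Fin N)) →
      cq y z i = none := by
    intro y z i hi
    simp only [Finset.mem_insert, Finset.mem_singleton, not_or] at hi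
    simp [hcq, hi.1, hi.2.1, hi.2.2.1, hi.2.2.2]
  have hind : ∀ (y z : Fin d) (x : Fin N → Fin d),
      ∏ i, cind (cq y z i) (x i)
        = ((if x a = y then (1:ℝ) else 0) * (if x b = y then 1 else 0)) *
          ((if x c = z then 1 else 0) * (if x e = z then 1 else 0)) := by
    intro y z x
    rw [prod_restrict _ ({a, b, c, e}) (fun i hi => by simp [cind, hout y z i hi]),
      prod_quad _ hab hac hae hbc hbe hce]
    simp [hcq, cind, hab.symm, hac.symm, hae.symm, hbc.symm, hbe.symm, hce.symm]
  have hval : ∀ y z : Fin d, ∏ i, cval p (cq y z i) = (p y ^ 2) * (p z ^ 2) := by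
    intro y z
    rw [prod_restrict _ ({a, b, c, e}) (fun i hi => by simp [cval, hout y z i hi]),
      prod_quad _ hab hac hae hbc hbe hce]
    simp [hcq, cval, hab.symm, hac.symm, hae.symm, hbc.symm, hbe.symm, hce.symm]
    ring
  have hpt : ∀ x : Fin N → Fin d,
      J a b x * J c e x = ∑ y, ∑ z, ∏ i, cind (cq y z i) (x i) := by
    intro x
    simp_rw [hind]
    rw [pair_pt x a b, pair_pt x c e, Finset.sum_mul_sum]
  calc ∑ x : Fin N → Fin d, (∏ i, p (x i)) * (J a b x * J c e x)
      = ∑ x : Fin N → Fin d, ∑ y, ∑ z, (∏ i, p (x i)) * ∏ i, cind (cq y z i) (x i) := by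
        refine Finset.sum_congr rfl fun x _ => ?_
        rw [hpt x, Finset.mul_sum]
        exact Finset.sum_congr rfl fun y _ => Finset.mul_sum _ _ _
    _ = ∑ y, ∑ z, ∑ x : Fin N → Fin d, (∏ i, p (x i)) * ∏ i, cind (cq y z i) (x i) := by
        rw [Finset.sum_comm]
        exact Finset.sum_congr rfl fun y _ => Finset.sum_comm
    _ = ∑ y, ∑ z, ∏ i, cval p (cq y z i) :=
        Finset.sum_congr rfl fun y _ => Finset.sum_congr rfl fun z _ => key p hsum _
    _ = ∑ y, ∑ z, (p y ^ 2) * (p z ^ 2) :=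
        Finset.sum_congr rfl fun y _ => Finset.sum_congr rfl fun z _ => hval y z
    _ = (∑ y, p y ^ 2) ^ 2 := by rw [← Finset.sum_mul_sum, sq]

noncomputable def chi (a b : Fin N) : ℝ := if a < b then 1 else 0

noncomputable def ind (a b : Fin N) : ℝ := if a = b then 1 else 0

lemma Jsq (a b : Fin N) (x : Fin N → Fin d) : J a b x * J a b x = J a b x := by
  unfold J
  rcases eq_or_ne (x a) (x b) with h | h <;> simp [h]

lemma master (p : Fin d → ℝ) (hsum : ∑ x, p x = 1) {a b c e : Fin N}
    (hab : a < b) (hce : c < e) :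
    ∑ x : Fin N → Fin d, (∏ i, p (x i)) * (J a b x * J c e x)
      = (∑ y, p y ^ 2) ^ 2
        + ((∑ y, p y ^ 3) - (∑ y, p y ^ 2) ^ 2) * (ind a c + ind a e + ind b c + ind b e)
        + ((∑ y, p y ^ 2) + (∑ y, p y ^ 2) ^ 2 - 2 * (∑ y, p y ^ 3)) *
            (ind a c * ind b e) := by
  by_cases hac : a = c
  · subst hac
    by_cases hbe : b = e
    · subst hbe
      simp_rw [Jsq]
      rw [Epair p hsum hab.ne]
      simp [ind, hab.ne, hab.ne']
      ring
    · -- a = c, b ≠ e : triple a b e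
      rw [Etriple p hsum hab.ne hce.ne hbe]
      simp [ind, hab.ne, hab.ne', hce.ne, hce.ne', hbe]
  · by_cases hbe : b = e
    · subst hbe
      -- b = e, a ≠ c : triple b a c
      simp_rw [Jsymm a b, Jsymm c b]
      rw [Etriple p hsum hab.ne' hce.ne' hac]
      simp [ind, hab.ne, hab.ne', hce.ne, hce.ne', hac]
    · by_cases hae : a = e
      · subst hae
        -- a = e, a ≠ c, b ≠ a : triple a b c
        have hbc : b ≠ c := fun h => absurd (h ▸ hab) (asymm hce)
        simp_rw [Jsymm c a]
        rw [Etriple p hsum hab.ne hce.ne' hbc]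
        simp [ind, hab.ne, hab.ne', hce.ne, hce.ne', hac, hbc, hbe]
      · by_cases hbc : b = c
        · subst hbc
          -- b = c : triple b a e
          simp_rw [Jsymm a b]
          rw [Etriple p hsum hab.ne' hce.ne (ne_of_lt (hab.trans hce))]
          simp [ind, hab.ne, hab.ne', hce.ne, hce.ne', hac, hbe, hae]
        · rw [Equad p hsum hab.ne hac hae hbc hbe hce.ne]
          simp [ind, hac, hae, hbc, hbe]

lemma pickL (u : Fin N) (G : Fin N → ℝ) : ∑ v, G v * ind u v = G u := by
  simp [ind, mul_ite, mul_one, mul_zero, Finset.sum_ite_eq]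

lemma chi_sq (a b : Fin N) : chi a b * chi a b = chi a b := by
  unfold chi; by_cases h : a < b <;> simp [h]

lemma RL (a : Fin N) : (∑ b, chi a b) + (∑ b, chi b a) = (N : ℝ) - 1 := by
  rw [← Finset.sum_add_distrib]
  have h : ∀ b : Fin N, chi a b + chi b a = 1 - ind a b := by
    intro b
    unfold chi ind
    rcases lt_trichotomy a b with h | h | h
    · simp [h, asymm h, h.ne]
    · simp [h]
    · simp [h, asymm h, h.ne']
  simp_rw [h]
  rw [Finset.sum_sub_distrib, Finset.sum_const, Finset.card_univ, Fintype.card_fin,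
    nsmul_eq_mul, mul_one]
  simp [ind, Finset.sum_ite_eq]

lemma swapE {α β : Type*} [Fintype α] [Fintype β] (w : β → ℝ) (F : α → β → ℝ) :
    ∑ x : β, w x * ∑ a : α, F a x = ∑ a : α, ∑ x : β, w x * F a x := by
  simp_rw [Finset.mul_sum]
  exact Finset.sum_comm

lemma B1 : (∑ a : Fin N, ∑ b : Fin N, ∑ c : Fin N, ∑ e : Fin N, chi a b * chi c e)
    = (∑ a : Fin N, ∑ b : Fin N, chi a b) ^ 2 := by
  have h1 : ∀ a b : Fin N, ∑ c : Fin N, ∑ e : Fin N, chi a b * chi c e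
      = chi a b * ∑ c : Fin N, ∑ e : Fin N, chi c e := by
    intro a b; simp_rw [← Finset.mul_sum]
  simp_rw [h1, ← Finset.sum_mul, sq]

lemma B2 : (∑ a : Fin N, ∑ b : Fin N, ∑ c : Fin N, ∑ e : Fin N,
      chi a b * (chi c e * ind a c))
    = ∑ a : Fin N, (∑ b : Fin N, chi a b) * (∑ b : Fin N, chi a b) := by
  refine Finset.sum_congr rfl fun a _ => ?_
  have h1 : ∑ c : Fin N, ∑ e : Fin N, chi c e * ind a c = ∑ b : Fin N, chi a b := by
    have h2 : ∀ c : Fin N, ∑ e : Fin N, chi c e * ind a c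
        = (∑ e : Fin N, chi c e) * ind a c := fun c => by rw [Finset.sum_mul]
    simp_rw [h2]
    exact pickL a _
  have h3 : ∀ b : Fin N, ∑ c : Fin N, ∑ e : Fin N, chi a b * (chi c e * ind a c)
      = chi a b * ∑ b : Fin N, chi a b := by
    intro b; simp_rw [← Finset.mul_sum]; rw [h1]
  simp_rw [h3, ← Finset.sum_mul]

lemma B3 : (∑ a : Fin N, ∑ b : Fin N, ∑ c : Fin N, ∑ e : Fin N,
      chi a b * (chi c e * ind a e))
    = ∑ a : Fin N, (∑ b : Fin N, chi a b) * (∑ b : Fin N, chi b a) := by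
  refine Finset.sum_congr rfl fun a _ => ?_
  have h1 : ∑ c : Fin N, ∑ e : Fin N, chi c e * ind a e = ∑ b : Fin N, chi b a :=
    Finset.sum_congr rfl fun c _ => pickL a (chi c)
  have h3 : ∀ b : Fin N, ∑ c : Fin N, ∑ e : Fin N, chi a b * (chi c e * ind a e)
      = chi a b * ∑ b : Fin N, chi b a := by
    intro b; simp_rw [← Finset.mul_sum]; rw [h1]
  simp_rw [h3, ← Finset.sum_mul]

lemma B4 : (∑ a : Fin N, ∑ b : Fin N, ∑ c : Fin N, ∑ e : Fin N,
      chi a b * (chi c e * ind b c))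
    = ∑ b : Fin N, (∑ a : Fin N, chi a b) * (∑ e : Fin N, chi b e) := by
  rw [Finset.sum_comm]
  refine Finset.sum_congr rfl fun b _ => ?_
  have h1 : ∑ c : Fin N, ∑ e : Fin N, chi c e * ind b c = ∑ e : Fin N, chi b e := by
    have h2 : ∀ c : Fin N, ∑ e : Fin N, chi c e * ind b c
        = (∑ e : Fin N, chi c e) * ind b c := fun c => by rw [Finset.sum_mul]
    simp_rw [h2]
    exact pickL b _
  have h3 : ∀ a : Fin N, ∑ c : Fin N, ∑ e : Fin N, chi a b * (chi c e * ind b c)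
      = chi a b * ∑ e : Fin N, chi b e := by
    intro a; simp_rw [← Finset.mul_sum]; rw [h1]
  simp_rw [h3, ← Finset.sum_mul]

lemma B5 : (∑ a : Fin N, ∑ b : Fin N, ∑ c : Fin N, ∑ e : Fin N,
      chi a b * (chi c e * ind b e))
    = ∑ b : Fin N, (∑ a : Fin N, chi a b) * (∑ a : Fin N, chi a b) := by
  rw [Finset.sum_comm]
  refine Finset.sum_congr rfl fun b _ => ?_
  have h1 : ∑ c : Fin N, ∑ e : Fin N, chi c e * ind b e = ∑ a : Fin N, chi a b :=
    Finset.sum_congr rfl fun c _ => pickL b (chi c)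
  have h3 : ∀ a : Fin N, ∑ c : Fin N, ∑ e : Fin N, chi a b * (chi c e * ind b e)
      = chi a b * ∑ a : Fin N, chi a b := by
    intro a; simp_rw [← Finset.mul_sum]; rw [h1]
  simp_rw [h3, ← Finset.sum_mul]

lemma B6 : (∑ a : Fin N, ∑ b : Fin N, ∑ c : Fin N, ∑ e : Fin N,
      chi a b * (chi c e * (ind a c * ind b e)))
    = ∑ a : Fin N, ∑ b : Fin N, chi a b := by
  refine Finset.sum_congr rfl fun a _ => Finset.sum_congr rfl fun b _ => ?_
  have h1 : ∀ c : Fin N, ∑ e : Fin N, chi c e * (ind a c * ind b e)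
      = (chi c b * ind a c) := by
    intro c
    have h2 : ∀ e : Fin N, chi c e * (ind a c * ind b e)
        = (chi c e * ind a c) * ind b e := fun e => by ring
    simp_rw [h2]
    exact pickL b _
  have h4 : ∑ c : Fin N, chi c b * ind a c = chi a b := pickL a _
  simp_rw [← Finset.mul_sum, h1, h4, chi_sq]


lemma hc2nat : ∀ m : ℕ, 2 * Nat.choose (m + 2) 2 = (m + 2) * (m + 1) := by
  intro m
  induction m with
  | zero => rfl
  | succ k ih =>
    have h : (k + 1 + 2) = (k + 2) + 1 := rfl
    rw [h, Nat.choose_succ_succ (k + 2) 1, Nat.choose_one_right, Nat.mul_add, ih]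
    ring

lemma hc3nat : ∀ m : ℕ, 6 * Nat.choose (m + 2) 3 = (m + 2) * (m + 1) * m := by
  intro m
  induction m with
  | zero => rfl
  | succ k ih =>
    have h : (k + 1 + 2) = (k + 2) + 1 := rfl
    rw [h, Nat.choose_succ_succ (k + 2) 2, Nat.mul_add]
    calc 6 * Nat.choose (k + 2) 2 + 6 * Nat.choose (k + 2) 3
        = 3 * (2 * Nat.choose (k + 2) 2) + 6 * Nat.choose (k + 2) 3 := by ring
      _ = 3 * ((k + 2) * (k + 1)) + (k + 2) * (k + 1) * k := by rw [hc2nat k, ih]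
      _ = (k + 1 + 2) * (k + 1 + 1) * (k + 1) := by ring

end CollVar

/-- For i.i.d. samples from a probability distribution `p` on a finite set
of size `d`, the collision counter `C = ∑_{a<b} 1[x a = x b]` has variance
`(N choose 2)(s₂ - s₂²) + 6 (N choose 3)(s₃ - s₂²)`, where `s₂ = ∑ x, p x ^ 2` and
`s₃ = ∑ x, p x ^ 3`. -/
theorem variance_collision_counter (d N : ℕ) (hd : 1 ≤ d) (hN : 2 ≤ N)
    (p : Fin d → ℝ) (hp : ∀ x, 0 ≤ p x) (hsum : ∑ x, p x = 1) :
    (∑ x : Fin N → Fin d, (∏ a, p (x a)) * (collisionCounter x) ^ 2) -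
        (∑ x : Fin N → Fin d, (∏ a, p (x a)) * collisionCounter x) ^ 2 =
      (N.choose 2 : ℝ) * ((∑ y, (p y) ^ 2) - (∑ y, (p y) ^ 2) ^ 2) +
        6 * (N.choose 3 : ℝ) * ((∑ y, (p y) ^ 3) - (∑ y, (p y) ^ 2) ^ 2) := by
  classical
  open CollVar in
  obtain ⟨n, hn⟩ : ∃ n, N = n + 2 := ⟨N - 2, by omega⟩
  set s2 : ℝ := ∑ y, (p y) ^ 2 with hs2
  set s3 : ℝ := ∑ y, (p y) ^ 3 with hs3
  set Q : ℝ := ∑ a : Fin N, ∑ b : Fin N, CollVar.chi a b with hQ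
  -- pointwise rewriting of the collision counter
  have hC : ∀ x : Fin N → Fin d, collisionCounter x
      = ∑ a : Fin N, ∑ b : Fin N, CollVar.chi a b * CollVar.J a b x := by
    intro x
    unfold collisionCounter CollVar.chi CollVar.J
    refine Finset.sum_congr rfl fun a _ => Finset.sum_congr rfl fun b _ => ?_
    by_cases h1 : a < b <;> by_cases h2 : x a = x b <;> simp [h1, h2]
  -- first moment
  have hEC : (∑ x : Fin N → Fin d, (∏ a, p (x a)) * collisionCounter x) = Q * s2 := by
    simp_rw [hC, CollVar.swapE]
    have h1 : ∀ a b : Fin N,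
        (∑ x : Fin N → Fin d, (∏ i, p (x i)) * (CollVar.chi a b * CollVar.J a b x))
          = CollVar.chi a b * s2 := by
      intro a b
      have hr : ∀ x : Fin N → Fin d, (∏ i, p (x i)) * (CollVar.chi a b * CollVar.J a b x)
          = CollVar.chi a b * ((∏ i, p (x i)) * CollVar.J a b x) := fun x => by ring
      simp_rw [hr, ← Finset.mul_sum]
      by_cases h : a < b
      · rw [CollVar.Epair p hsum h.ne, hs2]
      · simp [CollVar.chi, h]
    simp_rw [h1, ← Finset.sum_mul]
    rfl
  -- squared collision counter expansion
  have hsq : ∀ x : Fin N → Fin d, collisionCounter x ^ 2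
      = ∑ a : Fin N, ∑ b : Fin N, ∑ c : Fin N, ∑ e : Fin N,
          (CollVar.chi a b * CollVar.chi c e) * (CollVar.J a b x * CollVar.J c e x) := by
    intro x
    rw [hC x, sq, Finset.sum_mul_sum]
    refine Finset.sum_congr rfl fun a _ => ?_
    have h2 : ∀ c : Fin N,
        (∑ b : Fin N, CollVar.chi a b * CollVar.J a b x) *
          (∑ e : Fin N, CollVar.chi c e * CollVar.J c e x)
        = ∑ b : Fin N, ∑ e : Fin N,
            (CollVar.chi a b * CollVar.chi c e) * (CollVar.J a b x * CollVar.J c e x) := by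
      intro c
      rw [Finset.sum_mul_sum]
      exact Finset.sum_congr rfl fun b _ => Finset.sum_congr rfl fun e _ => by ring
    simp_rw [h2]
    exact Finset.sum_comm
  -- second moment, pointwise
  have hmain : ∀ a b c e : Fin N,
      (∑ x : Fin N → Fin d, (∏ i, p (x i)) *
        ((CollVar.chi a b * CollVar.chi c e) * (CollVar.J a b x * CollVar.J c e x)))
      = (CollVar.chi a b * CollVar.chi c e) *
          (s2 ^ 2 + (s3 - s2 ^ 2) *
            (CollVar.ind a c + CollVar.ind a e + CollVar.ind b c + CollVar.ind b e)
            + (s2 + s2 ^ 2 - 2 * s3) * (CollVar.ind a c * CollVar.ind b e)) := by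
    intro a b c e
    have hr : ∀ x : Fin N → Fin d, (∏ i, p (x i)) *
        ((CollVar.chi a b * CollVar.chi c e) * (CollVar.J a b x * CollVar.J c e x))
        = (CollVar.chi a b * CollVar.chi c e) *
            ((∏ i, p (x i)) * (CollVar.J a b x * CollVar.J c e x)) := fun x => by ring
    simp_rw [hr, ← Finset.mul_sum]
    by_cases h1 : a < b
    · by_cases h2 : c < e
      · rw [CollVar.master p hsum h1 h2, hs2, hs3]
      · simp [CollVar.chi, h2]
    · simp [CollVar.chi, h1]
  have split : ∀ a b c e : Fin N,
      (CollVar.chi a b * CollVar.chi c e) *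
          (s2 ^ 2 + (s3 - s2 ^ 2) *
            (CollVar.ind a c + CollVar.ind a e + CollVar.ind b c + CollVar.ind b e)
            + (s2 + s2 ^ 2 - 2 * s3) * (CollVar.ind a c * CollVar.ind b e))
      = (CollVar.chi a b * CollVar.chi c e) * s2 ^ 2
        + (CollVar.chi a b * (CollVar.chi c e * CollVar.ind a c)) * (s3 - s2 ^ 2)
        + (CollVar.chi a b * (CollVar.chi c e * CollVar.ind a e)) * (s3 - s2 ^ 2)
        + (CollVar.chi a b * (CollVar.chi c e * CollVar.ind b c)) * (s3 - s2 ^ 2)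
        + (CollVar.chi a b * (CollVar.chi c e * CollVar.ind b e)) * (s3 - s2 ^ 2)
        + (CollVar.chi a b * (CollVar.chi c e * (CollVar.ind a c * CollVar.ind b e))) *
            (s2 + s2 ^ 2 - 2 * s3) := by
    intro a b c e; ring
  have hEC2 : (∑ x : Fin N → Fin d, (∏ a, p (x a)) * collisionCounter x ^ 2)
      = Q ^ 2 * s2 ^ 2
        + (∑ a : Fin N, (∑ b : Fin N, CollVar.chi a b) * (∑ b : Fin N, CollVar.chi a b))
            * (s3 - s2 ^ 2)
        + (∑ a : Fin N, (∑ b : Fin N, CollVar.chi a b) * (∑ b : Fin N, CollVar.chi b a))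
            * (s3 - s2 ^ 2)
        + (∑ b : Fin N, (∑ a : Fin N, CollVar.chi a b) * (∑ e : Fin N, CollVar.chi b e))
            * (s3 - s2 ^ 2)
        + (∑ b : Fin N, (∑ a : Fin N, CollVar.chi a b) * (∑ a : Fin N, CollVar.chi a b))
            * (s3 - s2 ^ 2)
        + Q * (s2 + s2 ^ 2 - 2 * s3) := by
    have hstep : (∑ x : Fin N → Fin d, (∏ a, p (x a)) * collisionCounter x ^ 2)
        = ∑ a : Fin N, ∑ b : Fin N, ∑ c : Fin N, ∑ e : Fin N,
            (CollVar.chi a b * CollVar.chi c e) *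
              (s2 ^ 2 + (s3 - s2 ^ 2) *
                (CollVar.ind a c + CollVar.ind a e + CollVar.ind b c + CollVar.ind b e)
                + (s2 + s2 ^ 2 - 2 * s3) * (CollVar.ind a c * CollVar.ind b e)) := by
      simp_rw [hsq]
      simp_rw [CollVar.swapE]
      simp_rw [hmain]
    rw [hstep]
    have sum4_mul : ∀ (f : Fin N → Fin N → Fin N → Fin N → ℝ) (r : ℝ),
        (∑ a : Fin N, ∑ b : Fin N, ∑ c : Fin N, ∑ e : Fin N, f a b c e * r)
          = (∑ a : Fin N, ∑ b : Fin N, ∑ c : Fin N, ∑ e : Fin N, f a b c e) * r := by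
      intro f r
      rw [Finset.sum_mul]
      refine Finset.sum_congr rfl fun a _ => ?_
      rw [Finset.sum_mul]
      refine Finset.sum_congr rfl fun b _ => ?_
      rw [Finset.sum_mul]
      refine Finset.sum_congr rfl fun c _ => ?_
      rw [Finset.sum_mul]
    simp_rw [split]
    simp_rw [Finset.sum_add_distrib]
    rw [sum4_mul, sum4_mul, sum4_mul, sum4_mul, sum4_mul, sum4_mul,
      CollVar.B1, CollVar.B2, CollVar.B3, CollVar.B4, CollVar.B5, CollVar.B6]
  -- counting facts
  have hLQ : (∑ a : Fin N, ∑ b : Fin N, CollVar.chi b a) = Q := by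
    rw [hQ]; exact Finset.sum_comm
  have hB23 : (∑ a : Fin N, (∑ b : Fin N, CollVar.chi a b) * (∑ b : Fin N, CollVar.chi a b))
      + (∑ a : Fin N, (∑ b : Fin N, CollVar.chi a b) * (∑ b : Fin N, CollVar.chi b a))
      = ((N : ℝ) - 1) * Q := by
    rw [← Finset.sum_add_distrib]
    have h : ∀ a : Fin N,
        (∑ b : Fin N, CollVar.chi a b) * (∑ b : Fin N, CollVar.chi a b)
          + (∑ b : Fin N, CollVar.chi a b) * (∑ b : Fin N, CollVar.chi b a)
        = (∑ b : Fin N, CollVar.chi a b) * ((N : ℝ) - 1) := by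
      intro a; rw [← mul_add, CollVar.RL a]
    simp_rw [h, ← Finset.sum_mul]
    rw [← hQ, mul_comm]
  have hB45 : (∑ b : Fin N, (∑ a : Fin N, CollVar.chi a b) * (∑ e : Fin N, CollVar.chi b e))
      + (∑ b : Fin N, (∑ a : Fin N, CollVar.chi a b) * (∑ a : Fin N, CollVar.chi a b))
      = ((N : ℝ) - 1) * Q := by
    rw [← Finset.sum_add_distrib]
    have h : ∀ b : Fin N,
        (∑ a : Fin N, CollVar.chi a b) * (∑ e : Fin N, CollVar.chi b e)
          + (∑ a : Fin N, CollVar.chi a b) * (∑ a : Fin N, CollVar.chi a b)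
        = (∑ a : Fin N, CollVar.chi a b) * ((N : ℝ) - 1) := by
      intro b; rw [← mul_add, CollVar.RL b]
    simp_rw [h, ← Finset.sum_mul]
    rw [hLQ, mul_comm]
  have h2Q : 2 * Q = (N : ℝ) * ((N : ℝ) - 1) := by
    have h : Q + Q = ∑ a : Fin N, ((∑ b : Fin N, CollVar.chi a b)
        + (∑ b : Fin N, CollVar.chi b a)) := by
      rw [Finset.sum_add_distrib, ← hQ, hLQ]
    rw [two_mul, h]
    simp_rw [CollVar.RL]
    rw [Finset.sum_const, Finset.card_univ, Fintype.card_fin, nsmul_eq_mul]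
  have hQn : 2 * Q = ((n : ℝ) + 2) * (((n : ℝ) + 2) - 1) := by
    rw [h2Q, hn]; push_cast; ring
  have hc2 : (N.choose 2 : ℝ) = Q := by
    have h2 : (2 : ℝ) * ((n + 2).choose 2 : ℝ) = ((n : ℝ) + 2) * ((n : ℝ) + 1) := by
      exact_mod_cast CollVar.hc2nat n
    rw [hn]
    linear_combination (h2 - hQn) / 2
  have hc3 : 6 * (N.choose 3 : ℝ) = 2 * Q * ((N : ℝ) - 2) := by
    have h3 : (6 : ℝ) * ((n + 2).choose 3 : ℝ)
        = ((n : ℝ) + 2) * ((n : ℝ) + 1) * (n : ℝ) := by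
      exact_mod_cast CollVar.hc3nat n
    rw [hn]
    push_cast
    linear_combination h3 - (n : ℝ) * hQn
  rw [hEC2, hEC, hc2]
  linear_combination (s3 - s2 ^ 2) * hB23 + (s3 - s2 ^ 2) * hB45 +
    (s2 ^ 2 - s3) * hc3
end

section
/- Let d ≥ 1 and let μ be the Haar probability measure on the unitary group U(d). For U ∈ U(d), let p_U(x) = |⟨x|U|0⟩|² = |U_{x,0}|² be the Porter–Thomas output distribution on {0,…,d−1}. Then the Haar-averaged collision probability satisfies ∫ ∑_{x=0}^{d−1} p_U(x)² dμ(U) = 2/(d+1), whereas the collision probability of the uniform distribution on {0,…,d−1} is 1/d. -/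
open MeasureTheory Complex
variable {d : ℕ}
private lemma sum_rowxy (x y : Fin d) (hxy : x ≠ y) (a b : ℂ) (f : Fin d → ℂ) :
    ∑ k, (if k = x then a else if k = y then b else 0) * f k = a * f x + b * f y := by
  have h : ∀ k, (if k = x then a else if k = y then b else 0) * f k
      = (if k = x then a * f x else 0) + (if k = y then b * f y else 0) := by
    intro k
    by_cases h1 : k = x <;> by_cases h2 : k = y <;> simp_all
  simp [h, Finset.sum_add_distrib]
private lemma sum_single (i : Fin d) (f : Fin d → ℂ) :
    ∑ k, (if k = i then (1:ℂ) else 0) * f k = f i := by simp [ite_mul]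
private def pqMat (x y : Fin d) (p q r s : ℂ) : Matrix (Fin d) (Fin d) ℂ := fun i j =>
  if i = x then (if j = x then p else if j = y then q else 0)
  else if i = y then (if j = x then r else if j = y then s else 0)
  else if j = i then 1 else 0
private lemma pqMat_mem (x y : Fin d) (hxy : x ≠ y) (p q r s : ℂ)
    (h11 : p * starRingEnd ℂ p + q * starRingEnd ℂ q = 1)
    (h12 : p * starRingEnd ℂ r + q * starRingEnd ℂ s = 0)
    (h21 : r * starRingEnd ℂ p + s * starRingEnd ℂ q = 0)
    (h22 : r * starRingEnd ℂ r + s * starRingEnd ℂ s = 1) :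
    pqMat x y p q r s ∈ Matrix.unitaryGroup (Fin d) ℂ := by
  have hyx : y ≠ x := hxy.symm
  rw [Matrix.mem_unitaryGroup_iff]
  ext i j
  rw [Matrix.mul_apply]
  simp only [Matrix.star_apply, RCLike.star_def]
  rcases eq_or_ne i x with hi | hi
  · simp only [pqMat, hi, hyx, eq_self_iff_true, if_true, if_false, ite_true, ite_false]
    rw [sum_rowxy x y hxy p q]
    rcases eq_or_ne j x with hj | hj
    · simpa [Matrix.one_apply, hi, hj, hyx, hxy] using h11
    · rcases eq_or_ne j y with hj' | hj'
      · simpa [Matrix.one_apply, hi, hj', hyx, hxy] using h12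
      · simp [Matrix.one_apply, hi, hj, hj', Ne.symm hj, Ne.symm hj', hxy, hyx]
  · rcases eq_or_ne i y with hi' | hi'
    · simp only [pqMat, hi, hi', hyx, eq_self_iff_true, if_true, if_false, ite_true, ite_false]
      rw [sum_rowxy x y hxy r s]
      rcases eq_or_ne j x with hj | hj
      · simpa [Matrix.one_apply, hi', hj, hyx, hxy] using h21
      · rcases eq_or_ne j y with hj' | hj'
        · simpa [Matrix.one_apply, hi', hj', hyx, hxy] using h22
        · simp [Matrix.one_apply, hi', hj, hj', Ne.symm hj, Ne.symm hj', hxy, hyx]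
    · simp only [pqMat, hi, hi', if_false, ite_false]
      rw [sum_single i]
      rcases eq_or_ne j x with hj | hj
      · simp [Matrix.one_apply, hi, hi', hj, Ne.symm hi]
      · rcases eq_or_ne j y with hj' | hj'
        · simp [Matrix.one_apply, hi, hi', hj', Ne.symm hi']
        · by_cases hij : i = j <;>
            simp [Matrix.one_apply, hij, hj, hj', hi, hi', Ne.symm hj, Ne.symm hj']
private lemma pqMat_mul_apply (x y : Fin d) (hxy : x ≠ y) (p q r s : ℂ)
    (U : Matrix (Fin d) (Fin d) ℂ) (j : Fin d) (i : Fin d) :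
    (pqMat x y p q r s * U) i j =
      if i = x then p * U x j + q * U y j
      else if i = y then r * U x j + s * U y j else U i j := by
  rw [Matrix.mul_apply]
  rcases eq_or_ne i x with hi | hi
  · simp only [pqMat, hi, hxy.symm, eq_self_iff_true, if_true, if_false, ite_true, ite_false]
    rw [sum_rowxy x y hxy p q]
  · rcases eq_or_ne i y with hi' | hi'
    · simp only [pqMat, hi, hi', hxy.symm, eq_self_iff_true, if_true, if_false, ite_true,
        ite_false]
      rw [sum_rowxy x y hxy r s]
    · simp only [pqMat, hi, hi', if_false, ite_false]
      rw [sum_single i]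
private lemma key_id (u v : ℂ) :
    (‖((Real.sqrt 2)⁻¹ : ℝ) * u + ((Real.sqrt 2)⁻¹ : ℝ) * v‖ ^ 2) ^ 2 +
      (‖((Real.sqrt 2)⁻¹ : ℝ) * u + (-((Real.sqrt 2)⁻¹ : ℝ) : ℂ) * v‖ ^ 2) ^ 2 +
      ((‖((Real.sqrt 2)⁻¹ : ℝ) * u + (((Real.sqrt 2)⁻¹ : ℝ) * I) * v‖ ^ 2) ^ 2 +
      (‖(((Real.sqrt 2)⁻¹ : ℝ) * I) * u + ((Real.sqrt 2)⁻¹ : ℝ) * v‖ ^ 2) ^ 2) =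
    (‖u‖ ^ 2) ^ 2 + (‖v‖ ^ 2) ^ 2 +
      4 * (‖u‖ ^ 2 * ‖v‖ ^ 2) := by
  have hc : ∀ w : ℂ, ‖(((Real.sqrt 2)⁻¹ : ℝ) : ℂ) * w‖ ^ 2
      = (1 / 2) * ‖w‖ ^ 2 := by
    intro w
    rw [norm_mul, mul_pow, Complex.norm_real, Real.norm_eq_abs, sq_abs]
    norm_num [Real.sq_sqrt]
  have e1 : (((Real.sqrt 2)⁻¹ : ℝ) : ℂ) * u + (((Real.sqrt 2)⁻¹ : ℝ) : ℂ) * v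
      = (((Real.sqrt 2)⁻¹ : ℝ) : ℂ) * (u + v) := by ring
  have e2 : (((Real.sqrt 2)⁻¹ : ℝ) : ℂ) * u + (-(((Real.sqrt 2)⁻¹ : ℝ) : ℂ)) * v
      = (((Real.sqrt 2)⁻¹ : ℝ) : ℂ) * (u - v) := by ring
  have e3 : (((Real.sqrt 2)⁻¹ : ℝ) : ℂ) * u + ((((Real.sqrt 2)⁻¹ : ℝ) : ℂ) * I) * v
      = (((Real.sqrt 2)⁻¹ : ℝ) : ℂ) * (u + I * v) := by ring
  have e4 : ((((Real.sqrt 2)⁻¹ : ℝ) : ℂ) * I) * u + (((Real.sqrt 2)⁻¹ : ℝ) : ℂ) * v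
      = (((Real.sqrt 2)⁻¹ : ℝ) : ℂ) * (I * u + v) := by ring
  rw [e1, e2, e3, e4, hc, hc, hc, hc]
  simp only [Complex.sq_norm, Complex.normSq_apply, Complex.add_re, Complex.add_im,
    Complex.sub_re, Complex.sub_im, Complex.mul_re, Complex.mul_im, Complex.I_re, Complex.I_im]
  ring

noncomputable instance unitaryGroupMeasurableSpace (d : ℕ) :
    MeasurableSpace (Matrix.unitaryGroup (Fin d) ℂ) := borel _

instance unitaryGroupBorelSpace (d : ℕ) :
    BorelSpace (Matrix.unitaryGroup (Fin d) ℂ) := ⟨rfl⟩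

private lemma col_norm (U : Matrix.unitaryGroup (Fin d) ℂ) (z : Fin d) :
    ∑ i : Fin d, ‖(U : Matrix (Fin d) (Fin d) ℂ) i z‖ ^ 2 = 1 := by
  have hUU := congrFun (congrFun (Matrix.UnitaryGroup.star_mul_self U) z) z
  rw [Matrix.mul_apply] at hUU
  simp only [Matrix.star_apply, Matrix.one_apply_eq, RCLike.star_def] at hUU
  have h2 : ((∑ i : Fin d, ‖(U : Matrix (Fin d) (Fin d) ℂ) i z‖ ^ 2 : ℝ) : ℂ) = 1 := by
    push_cast
    rw [← hUU]
    congr 1; ext i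
    rw [← Complex.normSq_eq_conj_mul_self, ← Complex.sq_norm]; norm_cast
  exact_mod_cast h2

private lemma entry_bound (U : Matrix.unitaryGroup (Fin d) ℂ) (x z : Fin d) :
    ‖(U : Matrix (Fin d) (Fin d) ℂ) x z‖ ^ 2 ≤ 1 := by
  rw [← col_norm U z]
  exact Finset.single_le_sum
    (f := fun i => ‖(U : Matrix (Fin d) (Fin d) ℂ) i z‖ ^ 2)
    (fun i _ => sq_nonneg _) (Finset.mem_univ x)

private lemma cont_entry (x z : Fin d) :
    Continuous (fun U : Matrix.unitaryGroup (Fin d) ℂ =>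
      ‖(U : Matrix (Fin d) (Fin d) ℂ) x z‖) := by
  have : Continuous (fun U : Matrix.unitaryGroup (Fin d) ℂ =>
      (U : Matrix (Fin d) (Fin d) ℂ) x z) :=
    (continuous_apply z).comp ((continuous_apply x).comp continuous_subtype_val)
  exact continuous_norm.comp this

private lemma integ_aux {μ : Measure (Matrix.unitaryGroup (Fin d) ℂ)} [IsFiniteMeasure μ]
    (f : Matrix.unitaryGroup (Fin d) ℂ → ℝ) (hf : Continuous f) (C : ℝ)
    (hb : ∀ U, |f U| ≤ C) : Integrable f μ :=
  Integrable.mono' (integrable_const C) hf.aestronglyMeasurable (ae_of_all _ hb)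

private lemma pair_integral (μ : Measure (Matrix.unitaryGroup (Fin d) ℂ))
    [μ.IsHaarMeasure] [IsProbabilityMeasure μ] (x y z : Fin d) (hxy : x ≠ y) :
    (∫ U : Matrix.unitaryGroup (Fin d) ℂ,
        ((‖(U : Matrix (Fin d) (Fin d) ℂ) x z‖ ^ 2) ^ 2
          + (‖(U : Matrix (Fin d) (Fin d) ℂ) y z‖ ^ 2) ^ 2) ∂μ) =
    4 * ∫ U : Matrix.unitaryGroup (Fin d) ℂ,
        (‖(U : Matrix (Fin d) (Fin d) ℂ) x z‖ ^ 2
          * ‖(U : Matrix (Fin d) (Fin d) ℂ) y z‖ ^ 2) ∂μ := by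
  set c : ℂ := (((Real.sqrt 2)⁻¹ : ℝ) : ℂ) with hcdef
  have hcconj : starRingEnd ℂ c = c := by simp [hcdef]
  have hcc : c * c = 1 / 2 := by
    rw [hcdef]
    norm_cast
    rw [← mul_inv]
    norm_num [Real.mul_self_sqrt]
  have hIconj : starRingEnd ℂ I = -I := Complex.conj_I
  have hV1mem : pqMat x y c c c (-c) ∈ Matrix.unitaryGroup (Fin d) ℂ := by
    refine pqMat_mem x y hxy _ _ _ _ ?_ ?_ ?_ ?_ <;>
      simp only [map_mul, map_neg, hcconj, hIconj, mul_neg, neg_neg]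
    · linear_combination 2 * hcc
    · ring
    · ring
    · linear_combination 2 * hcc
  have hV2mem : pqMat x y c (c * I) (c * I) c ∈ Matrix.unitaryGroup (Fin d) ℂ := by
    refine pqMat_mem x y hxy _ _ _ _ ?_ ?_ ?_ ?_ <;>
      simp only [map_mul, map_neg, hcconj, hIconj, mul_neg, neg_neg]
    · linear_combination 2 * hcc - c ^ 2 * Complex.I_sq
    · ring
    · ring
    · linear_combination 2 * hcc - c ^ 2 * Complex.I_sq
  set V1 : Matrix.unitaryGroup (Fin d) ℂ := ⟨pqMat x y c c c (-c), hV1mem⟩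
  set V2 : Matrix.unitaryGroup (Fin d) ℂ := ⟨pqMat x y c (c * I) (c * I) c, hV2mem⟩
  set f : Matrix.unitaryGroup (Fin d) ℂ → ℝ := fun U =>
    (‖(U : Matrix (Fin d) (Fin d) ℂ) x z‖ ^ 2) ^ 2
      + (‖(U : Matrix (Fin d) (Fin d) ℂ) y z‖ ^ 2) ^ 2 with hfdef
  set g : Matrix.unitaryGroup (Fin d) ℂ → ℝ := fun U =>
    ‖(U : Matrix (Fin d) (Fin d) ℂ) x z‖ ^ 2
      * ‖(U : Matrix (Fin d) (Fin d) ℂ) y z‖ ^ 2 with hgdef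
  have hfcont : Continuous f := (((cont_entry x z).pow 2).pow 2).add
    (((cont_entry y z).pow 2).pow 2)
  have hgcont : Continuous g := ((cont_entry x z).pow 2).mul ((cont_entry y z).pow 2)
  have hfb : ∀ U, |f U| ≤ 2 := by
    intro U
    have h1 := entry_bound U x z
    have h2 := entry_bound U y z
    have n1 : (0:ℝ) ≤ ‖(U : Matrix (Fin d) (Fin d) ℂ) x z‖ ^ 2 := sq_nonneg _
    have n2 : (0:ℝ) ≤ ‖(U : Matrix (Fin d) (Fin d) ℂ) y z‖ ^ 2 := sq_nonneg _
    rw [hfdef, _root_.abs_of_nonneg (by positivity)]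
    dsimp only
    nlinarith
  have hgb : ∀ U, |g U| ≤ 1 := by
    intro U
    have h1 := entry_bound U x z
    have h2 := entry_bound U y z
    have n1 : (0:ℝ) ≤ ‖(U : Matrix (Fin d) (Fin d) ℂ) x z‖ ^ 2 := sq_nonneg _
    have n2 : (0:ℝ) ≤ ‖(U : Matrix (Fin d) (Fin d) ℂ) y z‖ ^ 2 := sq_nonneg _
    rw [hgdef, _root_.abs_of_nonneg (by positivity)]
    dsimp only
    nlinarith
  have hmul_cont : ∀ V : Matrix.unitaryGroup (Fin d) ℂ,
      Continuous (fun U : Matrix.unitaryGroup (Fin d) ℂ => V * U) :=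
    fun V => continuous_const.mul continuous_id
  have hinv1 : ∫ U, f (V1 * U) ∂μ = ∫ U, f U ∂μ := integral_mul_left_eq_self f V1
  have hinv2 : ∫ U, f (V2 * U) ∂μ = ∫ U, f U ∂μ := integral_mul_left_eq_self f V2
  have hptwise : ∀ U : Matrix.unitaryGroup (Fin d) ℂ,
      f (V1 * U) + f (V2 * U) = f U + 4 * g U := by
    intro U
    have e1 : ((V1 * U : Matrix.unitaryGroup (Fin d) ℂ) : Matrix (Fin d) (Fin d) ℂ)
        = pqMat x y c c c (-c) * (U : Matrix (Fin d) (Fin d) ℂ) := rfl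
    have e2 : ((V2 * U : Matrix.unitaryGroup (Fin d) ℂ) : Matrix (Fin d) (Fin d) ℂ)
        = pqMat x y c (c * I) (c * I) c * (U : Matrix (Fin d) (Fin d) ℂ) := rfl
    rw [hfdef, hgdef]
    simp only [e1, e2, pqMat_mul_apply x y hxy _ _ _ _ _ z, if_pos rfl, hxy.symm, if_neg hxy.symm,
      if_false, eq_self_iff_true, if_true, ite_true, ite_false]
    have := key_id ((U : Matrix (Fin d) (Fin d) ℂ) x z) ((U : Matrix (Fin d) (Fin d) ℂ) y z)
    rw [hcdef]
    linarith [this]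
  have hIf1 : Integrable (fun U => f (V1 * U)) μ :=
    integ_aux _ (hfcont.comp (hmul_cont V1)) 2 (fun U => hfb _)
  have hIf2 : Integrable (fun U => f (V2 * U)) μ :=
    integ_aux _ (hfcont.comp (hmul_cont V2)) 2 (fun U => hfb _)
  have hIf : Integrable f μ := integ_aux _ hfcont 2 hfb
  have hIg : Integrable g μ := integ_aux _ hgcont 1 hgb
  have hsum : ∫ U, f U ∂μ + ∫ U, f U ∂μ = ∫ U, f U ∂μ + 4 * ∫ U, g U ∂μ := by
    calc ∫ U, f U ∂μ + ∫ U, f U ∂μ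
        = ∫ U, f (V1 * U) ∂μ + ∫ U, f (V2 * U) ∂μ := by rw [hinv1, hinv2]
      _ = ∫ U, (f (V1 * U) + f (V2 * U)) ∂μ := (integral_add hIf1 hIf2).symm
      _ = ∫ U, (f U + 4 * g U) ∂μ := by
            apply integral_congr_ae
            exact ae_of_all _ hptwise
      _ = ∫ U, f U ∂μ + 4 * ∫ U, g U ∂μ := by
            rw [integral_add hIf (hIg.const_mul 4), integral_const_mul]
  linarith [hsum]

/-- For the Haar probability measure `μ` on `U(d)` and the Porter–Thomas
distribution `p_U(x) = |U_{x,0}|²`, the Haar-averaged collision probability is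
`∫ ∑_x p_U(x)² dμ(U) = 2/(d+1)`, whereas the collision probability of the uniform
distribution on `{0,…,d-1}` is `1/d`. -/
theorem haar_average_collision_probability (d : ℕ) (hd : 1 ≤ d)
    (μ : Measure (Matrix.unitaryGroup (Fin d) ℂ))
    [μ.IsHaarMeasure] [IsProbabilityMeasure μ] :
    (∫ U : Matrix.unitaryGroup (Fin d) ℂ,
        ∑ x : Fin d,
          ((‖(U : Matrix (Fin d) (Fin d) ℂ) x ⟨0, hd⟩‖) ^ 2) ^ 2 ∂μ =
      2 / ((d : ℝ) + 1)) ∧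
    (∑ _x : Fin d, ((1 : ℝ) / d) ^ 2 = 1 / d) := by
  have hd0 : (0:ℝ) < (d:ℝ) := by exact_mod_cast Nat.lt_of_lt_of_le Nat.zero_lt_one hd
  constructor
  · set z : Fin d := ⟨0, hd⟩ with hz
    set A : Fin d → ℝ := fun x => ∫ U : Matrix.unitaryGroup (Fin d) ℂ,
      ((‖(U : Matrix (Fin d) (Fin d) ℂ) x z‖) ^ 2) ^ 2 ∂μ with hA
    set B : Fin d → Fin d → ℝ := fun x y => ∫ U : Matrix.unitaryGroup (Fin d) ℂ,
      ((‖(U : Matrix (Fin d) (Fin d) ℂ) x z‖) ^ 2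
        * (‖(U : Matrix (Fin d) (Fin d) ℂ) y z‖) ^ 2) ∂μ with hB
    have hIF : ∀ x : Fin d, Integrable (fun U : Matrix.unitaryGroup (Fin d) ℂ =>
        ((‖(U : Matrix (Fin d) (Fin d) ℂ) x z‖) ^ 2) ^ 2) μ := by
      intro x
      refine integ_aux _ (((cont_entry x z).pow 2).pow 2) 1 fun U => ?_
      have h1 := entry_bound U x z
      have n1 : (0:ℝ) ≤ ‖(U : Matrix (Fin d) (Fin d) ℂ) x z‖ ^ 2 := sq_nonneg _
      rw [_root_.abs_of_nonneg (by positivity)]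
      nlinarith
    have hIG : ∀ x y : Fin d, Integrable (fun U : Matrix.unitaryGroup (Fin d) ℂ =>
        (‖(U : Matrix (Fin d) (Fin d) ℂ) x z‖) ^ 2
          * (‖(U : Matrix (Fin d) (Fin d) ℂ) y z‖) ^ 2) μ := by
      intro x y
      refine integ_aux _ (((cont_entry x z).pow 2).mul ((cont_entry y z).pow 2)) 1 fun U => ?_
      have h1 := entry_bound U x z
      have h2 := entry_bound U y z
      have n1 : (0:ℝ) ≤ ‖(U : Matrix (Fin d) (Fin d) ℂ) x z‖ ^ 2 := sq_nonneg _
      have n2 : (0:ℝ) ≤ ‖(U : Matrix (Fin d) (Fin d) ℂ) y z‖ ^ 2 := sq_nonneg _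
      rw [_root_.abs_of_nonneg (by positivity)]
      nlinarith
    have hstep1 : ∫ U : Matrix.unitaryGroup (Fin d) ℂ,
        ∑ x : Fin d,
          ((‖(U : Matrix (Fin d) (Fin d) ℂ) x z‖) ^ 2) ^ 2 ∂μ = ∑ x, A x :=
      integral_finset_sum Finset.univ fun x _ => hIF x
    have hBAA : ∀ x, B x x = A x := by
      intro x
      simp only [hB, hA]
      exact integral_congr_ae (ae_of_all _ fun U => by ring)
    have hpair : ∀ x y : Fin d, x ≠ y → A x + A y = 4 * B x y := by
      intro x y hxy
      have h := pair_integral μ x y z hxy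
      rwa [integral_add (hIF x) (hIF y)] at h
    have htotal : ∑ x, ∑ y, B x y = 1 := by
      have hptw : ∀ U : Matrix.unitaryGroup (Fin d) ℂ,
          ∑ x : Fin d, ∑ y : Fin d,
            ((‖(U : Matrix (Fin d) (Fin d) ℂ) x z‖) ^ 2
              * (‖(U : Matrix (Fin d) (Fin d) ℂ) y z‖) ^ 2) = 1 := by
        intro U
        rw [← Finset.sum_mul_sum, col_norm U z]
        norm_num
      have h1 : ∀ x : Fin d, ∑ y, B x y = ∫ U : Matrix.unitaryGroup (Fin d) ℂ,
          ∑ y : Fin d, ((‖(U : Matrix (Fin d) (Fin d) ℂ) x z‖) ^ 2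
            * (‖(U : Matrix (Fin d) (Fin d) ℂ) y z‖) ^ 2) ∂μ :=
        fun x => (integral_finset_sum Finset.univ fun y _ => hIG x y).symm
      calc ∑ x, ∑ y, B x y
          = ∫ U : Matrix.unitaryGroup (Fin d) ℂ, ∑ x : Fin d, ∑ y : Fin d,
              ((‖(U : Matrix (Fin d) (Fin d) ℂ) x z‖) ^ 2
                * (‖(U : Matrix (Fin d) (Fin d) ℂ) y z‖) ^ 2) ∂μ := by
            rw [Finset.sum_congr rfl fun x _ => h1 x]
            exact (integral_finset_sum Finset.univ fun x _ =>
              integrable_finset_sum Finset.univ fun y _ => hIG x y).symm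
        _ = ∫ _U : Matrix.unitaryGroup (Fin d) ℂ, (1:ℝ) ∂μ :=
            integral_congr_ae (ae_of_all _ hptw)
        _ = 1 := by simp
    set S := ∑ x, A x with hS
    have hrow : ∀ x : Fin d, ∑ y, B x y = A x + (((d:ℝ) - 1) / 4) * A x + (S - A x) / 4 := by
      intro x
      have he : ∀ y ∈ Finset.univ.erase x, B x y = A x / 4 + A y / 4 := by
        intro y hy
        have hyx : x ≠ y := (Finset.ne_of_mem_erase hy).symm
        have := hpair x y hyx
        linarith
      rw [← Finset.add_sum_erase Finset.univ (B x) (Finset.mem_univ x), hBAA x,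
        Finset.sum_congr rfl he, Finset.sum_add_distrib, Finset.sum_const,
        Finset.card_erase_of_mem (Finset.mem_univ x), Finset.card_univ, Fintype.card_fin,
        nsmul_eq_mul, ← Finset.sum_div, Finset.sum_erase_eq_sub (Finset.mem_univ x), ← hS]
      push_cast [hd]
      ring
    rw [Finset.sum_congr rfl fun x _ => hrow x, Finset.sum_add_distrib, Finset.sum_add_distrib,
      ← Finset.mul_sum, ← Finset.sum_div, Finset.sum_sub_distrib, Finset.sum_const,
      Finset.card_univ, Fintype.card_fin, nsmul_eq_mul, ← hS] at htotal
    rw [hstep1, eq_div_iff (by positivity : ((d:ℝ) + 1) ≠ 0)]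
    linear_combination 2 * htotal
  · rw [Finset.sum_const, Finset.card_univ, Fintype.card_fin, nsmul_eq_mul]
    field_simp
end

section
/- Let d ≥ 1 and let μ be the Haar probability measure on the unitary group U(d). For U ∈ U(d), let p_U(x) = |U_{x,0}|². Then ∫ ∑_{x=0}^{d−1} p_U(x)³ dμ(U) = 6/((d+1)(d+2)). -/
open MeasureTheory

namespace PTaux

variable {d : ℕ}

abbrev UG (d : ℕ) := Matrix.unitaryGroup (Fin d) ℂ

instance : ContinuousMul (UG d) := by
  constructor
  apply Continuous.subtype_mk
  exact (continuous_subtype_val.comp continuous_fst).matrix_mul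
    (continuous_subtype_val.comp continuous_snd)

instance : MeasurableMul (UG d) :=
  ⟨fun {g} => (continuous_mul_left g).measurable, fun {g} => (continuous_mul_right g).measurable⟩

lemma cont_entry (x c : Fin d) :
    Continuous (fun U : UG d => (U : Matrix (Fin d) (Fin d) ℂ) x c) :=
  (continuous_apply c).comp ((continuous_apply x).comp continuous_subtype_val)

/-- squared modulus of the (x,c) entry -/
def A (c x : Fin d) (U : UG d) : ℝ := Complex.normSq ((U : Matrix (Fin d) (Fin d) ℂ) x c)

lemma contA (c x : Fin d) : Continuous (A c x) :=
  Complex.continuous_normSq.comp (cont_entry x c)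

lemma colsum (c : Fin d) (U : UG d) : ∑ x, A c x U = 1 := by
  have h : (star (U : Matrix (Fin d) (Fin d) ℂ) * U) c c = (1 : Matrix (Fin d) (Fin d) ℂ) c c := by
    rw [U.2.1]
  rw [Matrix.mul_apply, Matrix.one_apply_eq] at h
  have h2 : ∑ x, ((Complex.normSq ((U : Matrix (Fin d) (Fin d) ℂ) x c) : ℂ)) = 1 := by
    rw [← h]
    refine Finset.sum_congr rfl fun x _ => ?_
    simp [Complex.normSq_eq_conj_mul_self, Complex.star_def]
  have := congrArg Complex.re h2
  simpa [A] using this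

lemma A_nonneg (c x : Fin d) (U : UG d) : 0 ≤ A c x U := Complex.normSq_nonneg _

lemma A_le_one (c x : Fin d) (U : UG d) : A c x U ≤ 1 := by
  have := colsum c U
  have h := Finset.single_le_sum (f := fun x => A c x U)
    (fun i _ => A_nonneg c i U) (Finset.mem_univ x)
  linarith

/-- matrix which is a 2×2 block (a b; c e) on coordinates x,y and identity elsewhere -/
def emb (x y : Fin d) (a b c e : ℂ) : Matrix (Fin d) (Fin d) ℂ := fun i j =>
  if i = x then (if j = x then a else if j = y then b else 0)
  else if i = y then (if j = x then c else if j = y then e else 0)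
  else if i = j then 1 else 0

lemma sum_pair {x y : Fin d} (hxy : x ≠ y) (p q : ℂ) (g : Fin d → ℂ) :
    ∑ j, (if j = x then p else if j = y then q else 0) * g j = p * g x + q * g y := by
  have key : ∀ j, (if j = x then p else if j = y then q else 0) * g j
      = (if j = x then p * g x else 0) + (if j = y then q * g y else 0) := by
    intro j
    by_cases h1 : j = x
    · subst h1; simp [hxy]
    · by_cases h2 : j = y
      · subst h2; simp [h1]
      · simp [h1, h2]
  rw [Finset.sum_congr rfl fun j _ => key j, Finset.sum_add_distrib]
  simp

lemma sum_id (z : Fin d) (g : Fin d → ℂ) :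
    ∑ j, (if z = j then (1:ℂ) else 0) * g j = g z := by
  simp [ite_mul]

lemma emb_apply_x (x y : Fin d) (a b c e : ℂ) (j : Fin d) :
    emb x y a b c e x j = if j = x then a else if j = y then b else 0 := by
  simp [emb]

lemma emb_apply_y {x y : Fin d} (hxy : x ≠ y) (a b c e : ℂ) (j : Fin d) :
    emb x y a b c e y j = if j = x then c else if j = y then e else 0 := by
  simp [emb, hxy.symm]

lemma emb_apply_other {x y i : Fin d} (hix : i ≠ x) (hiy : i ≠ y) (a b c e : ℂ) (j : Fin d) :
    emb x y a b c e i j = if i = j then 1 else 0 := by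
  simp [emb, hix, hiy]

lemma emb_mem {x y : Fin d} (hxy : x ≠ y) {a b c e : ℂ}
    (h11 : a * (starRingEnd ℂ) a + b * (starRingEnd ℂ) b = 1)
    (h22 : c * (starRingEnd ℂ) c + e * (starRingEnd ℂ) e = 1)
    (h12 : a * (starRingEnd ℂ) c + b * (starRingEnd ℂ) e = 0)
    (h21 : c * (starRingEnd ℂ) a + e * (starRingEnd ℂ) b = 0) :
    emb x y a b c e ∈ Matrix.unitaryGroup (Fin d) ℂ := by
  have hxx : emb x y a b c e x x = a := by simp [emb_apply_x]
  have hxy' : emb x y a b c e x y = b := by simp [emb_apply_x, Ne.symm hxy]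
  have hyx : emb x y a b c e y x = c := by simp [emb_apply_y hxy]
  have hyy : emb x y a b c e y y = e := by simp [emb_apply_y hxy, Ne.symm hxy]
  rw [Matrix.mem_unitaryGroup_iff]
  ext i k
  rw [Matrix.mul_apply]
  have hstar : ∀ j, (star (emb x y a b c e)) j k = (starRingEnd ℂ) (emb x y a b c e k j) :=
    fun j => rfl
  simp only [hstar]
  by_cases hi : i = x
  · subst hi
    simp only [emb_apply_x]
    rw [sum_pair hxy]
    by_cases hk : k = i
    · subst hk; rw [hxx, hxy', Matrix.one_apply_eq]; exact h11
    · by_cases hk2 : k = y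
      · subst hk2
        rw [hyx, hyy, Matrix.one_apply_ne (Ne.symm hk)]
        exact h12
      · rw [emb_apply_other hk hk2, emb_apply_other hk hk2,
          Matrix.one_apply_ne (Ne.symm hk), if_neg (fun h : k = i => hk h),
          if_neg (fun h : k = y => hk2 h)]
        simp
  · by_cases hi2 : i = y
    · subst hi2
      simp only [emb_apply_y hxy]
      rw [sum_pair hxy]
      by_cases hk : k = x
      · subst hk
        rw [hxx, hxy', Matrix.one_apply_ne (Ne.symm hxy)]
        exact h21
      · by_cases hk2 : k = i
        · subst hk2; rw [hyx, hyy, Matrix.one_apply_eq]; exact h22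
        · rw [emb_apply_other hk hk2, emb_apply_other hk hk2,
            Matrix.one_apply_ne (Ne.symm hk2), if_neg (fun h : k = x => hk h),
            if_neg (fun h : k = i => hk2 h)]
          simp
    · simp only [emb_apply_other hi hi2]
      rw [sum_id]
      by_cases hk : k = x
      · subst hk
        rw [emb_apply_x, if_neg (fun h : i = k => hi h), if_neg (fun h : i = y => hi2 h),
          Matrix.one_apply_ne (fun h : i = k => hi h)]
        simp
      · by_cases hk2 : k = y
        · subst hk2
          rw [emb_apply_y hxy, if_neg (fun h : i = x => hi h), if_neg (fun h : i = k => hi2 h),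
            Matrix.one_apply_ne (fun h : i = k => hi2 h)]
          simp
        · rw [emb_apply_other hk hk2]
          by_cases h : i = k
          · subst h; rw [if_pos rfl, Matrix.one_apply_eq]; simp
          · rw [if_neg (fun hh : k = i => h hh.symm), Matrix.one_apply_ne h]; simp

lemma emb_mul_apply_x {x y : Fin d} (hxy : x ≠ y) (a b c e : ℂ)
    (U : Matrix (Fin d) (Fin d) ℂ) (c0 : Fin d) :
    (emb x y a b c e * U) x c0 = a * U x c0 + b * U y c0 := by
  rw [Matrix.mul_apply]
  simp only [emb_apply_x]
  exact sum_pair hxy _ _ _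

lemma emb_mul_apply_y {x y : Fin d} (hxy : x ≠ y) (a b c e : ℂ)
    (U : Matrix (Fin d) (Fin d) ℂ) (c0 : Fin d) :
    (emb x y a b c e * U) y c0 = c * U x c0 + e * U y c0 := by
  rw [Matrix.mul_apply]
  simp only [emb_apply_y hxy]
  exact sum_pair hxy _ _ _

lemma emb_mul_apply_other {x y i : Fin d} (hix : i ≠ x) (hiy : i ≠ y) (a b c e : ℂ)
    (U : Matrix (Fin d) (Fin d) ℂ) (c0 : Fin d) :
    (emb x y a b c e * U) i c0 = U i c0 := by
  rw [Matrix.mul_apply]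
  simp only [emb_apply_other hix hiy]
  exact sum_id i _

noncomputable def rc : ℂ := ((Real.sqrt 2)⁻¹ : ℝ)

lemma normSq_rc : Complex.normSq rc = 1/2 := by
  rw [rc, Complex.normSq_ofReal]
  rw [← Real.sqrt_inv]
  rw [Real.mul_self_sqrt (by norm_num)]; norm_num

lemma normSq_rc_mul (z : ℂ) : Complex.normSq (rc * z) = (1/2) * Complex.normSq z := by
  rw [Complex.normSq_mul, normSq_rc]

lemma conj_rc : (starRingEnd ℂ) rc = rc := Complex.conj_ofReal _

lemma rc_sq : rc * rc = 1/2 := by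
  have h := normSq_rc
  rw [rc] at *
  rw [← Complex.ofReal_mul]
  rw [Complex.normSq_ofReal] at h
  rw [h]; norm_num

lemma rc_unitary1 :
    rc * (starRingEnd ℂ) rc + (-rc) * (starRingEnd ℂ) (-rc) = 1 ∧
    rc * (starRingEnd ℂ) rc + rc * (starRingEnd ℂ) rc = 1 ∧
    rc * (starRingEnd ℂ) rc + (-rc) * (starRingEnd ℂ) rc = 0 ∧
    rc * (starRingEnd ℂ) rc + rc * (starRingEnd ℂ) (-rc) = 0 := by
  have h := rc_sq
  simp only [map_neg, conj_rc]
  exact ⟨by linear_combination (2:ℂ) * h, by linear_combination (2:ℂ) * h, by ring, by ring⟩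

lemma rc_unitary2 :
    (rc*Complex.I) * (starRingEnd ℂ) (rc*Complex.I) + (-rc) * (starRingEnd ℂ) (-rc) = 1 ∧
    (rc*Complex.I) * (starRingEnd ℂ) (rc*Complex.I) + rc * (starRingEnd ℂ) rc = 1 ∧
    (rc*Complex.I) * (starRingEnd ℂ) (rc*Complex.I) + (-rc) * (starRingEnd ℂ) rc = 0 ∧
    (rc*Complex.I) * (starRingEnd ℂ) (rc*Complex.I) + rc * (starRingEnd ℂ) (-rc) = 0 := by
  have h := rc_sq
  have hI := Complex.I_mul_I
  have hq : rc * Complex.I * (rc * -Complex.I) = 1/2 := by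
    linear_combination (-(Complex.I*Complex.I)) * h + (-(1:ℂ)/2) * hI
  simp only [map_neg, map_mul, conj_rc, Complex.conj_I]
  refine ⟨?_, ?_, ?_, ?_⟩
  · linear_combination hq + h
  · linear_combination hq + h
  · linear_combination hq - h
  · linear_combination hq - h

lemma key2 (u v : ℂ) :
    (Complex.normSq (rc*u + (-rc)*v))^3 + (Complex.normSq (rc*u + rc*v))^3
  + (Complex.normSq (rc*Complex.I*u + (-rc)*v))^3 + (Complex.normSq (rc*Complex.I*u + rc*v))^3
  - 2*((Complex.normSq u)^3 + (Complex.normSq v)^3)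
  = -(3/2)*((Complex.normSq u)^3 + (Complex.normSq v)^3)
    + (9/2)*((Complex.normSq u)^2*Complex.normSq v + Complex.normSq u*(Complex.normSq v)^2) := by
  have e1 : rc*u + (-rc)*v = rc*(u - v) := by ring
  have e2 : rc*u + rc*v = rc*(u + v) := by ring
  have e3 : rc*Complex.I*u + (-rc)*v = rc*(Complex.I*u - v) := by ring
  have e4 : rc*Complex.I*u + rc*v = rc*(Complex.I*u + v) := by ring
  rw [e1, e2, e3, e4, normSq_rc_mul, normSq_rc_mul, normSq_rc_mul, normSq_rc_mul]
  simp only [Complex.normSq_apply, Complex.add_re, Complex.add_im, Complex.sub_re,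
    Complex.sub_im, Complex.mul_re, Complex.mul_im, Complex.I_re, Complex.I_im]
  ring

lemma key3 (v w : ℂ) :
    (Complex.normSq (rc*v + (-rc)*w)) * (Complex.normSq (rc*v + rc*w))
  + (Complex.normSq (rc*Complex.I*v + (-rc)*w)) * (Complex.normSq (rc*Complex.I*v + rc*w))
  - 2*(Complex.normSq v * Complex.normSq w)
  = (1/2)*((Complex.normSq v)^2 + (Complex.normSq w)^2)
    - 2*(Complex.normSq v * Complex.normSq w) := by
  have e1 : rc*v + (-rc)*w = rc*(v - w) := by ring
  have e2 : rc*v + rc*w = rc*(v + w) := by ring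
  have e3 : rc*Complex.I*v + (-rc)*w = rc*(Complex.I*v - w) := by ring
  have e4 : rc*Complex.I*v + rc*w = rc*(Complex.I*v + w) := by ring
  rw [e1, e2, e3, e4, normSq_rc_mul, normSq_rc_mul, normSq_rc_mul, normSq_rc_mul]
  simp only [Complex.normSq_apply, Complex.add_re, Complex.add_im, Complex.sub_re,
    Complex.sub_im, Complex.mul_re, Complex.mul_im, Complex.I_re, Complex.I_im]
  ring

/-- monomial integrand -/
def mon (c x y z : Fin d) (U : UG d) : ℝ := A c x U * A c y U * A c z U

lemma cont_mon (c x y z : Fin d) : Continuous (mon c x y z) :=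
  ((contA c x).mul (contA c y)).mul (contA c z)

lemma mon_bound (c x y z : Fin d) (U : UG d) : ‖mon c x y z U‖ ≤ 1 := by
  have hx0 := A_nonneg c x U; have hx1 := A_le_one c x U
  have hy0 := A_nonneg c y U; have hy1 := A_le_one c y U
  have hz0 := A_nonneg c z U; have hz1 := A_le_one c z U
  rw [Real.norm_eq_abs, abs_of_nonneg (by unfold mon; positivity)]
  unfold mon
  have h : A c x U * A c y U * A c z U ≤ 1 * 1 * 1 := by gcongr <;> assumption
  linarith

section Measure

variable (μ : Measure (UG d)) [μ.IsHaarMeasure] [IsProbabilityMeasure μ]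

lemma int_bdd {f : UG d → ℝ} (hf : Continuous f) {C : ℝ} (hC : ∀ U, ‖f U‖ ≤ C) :
    Integrable f μ :=
  (integrable_const C).mono' hf.aestronglyMeasurable (Filter.Eventually.of_forall hC)

lemma int_mon (c x y z : Fin d) : Integrable (mon c x y z) μ :=
  int_bdd μ (cont_mon c x y z) (fun U => mon_bound c x y z U)

/-- third-order moments -/
noncomputable def u3 (c x y z : Fin d) : ℝ := ∫ U, mon c x y z U ∂μ

lemma u3_rot (c x y z : Fin d) : u3 μ c x y z = u3 μ c z x y := by
  unfold u3
  congr 1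
  funext U
  unfold mon
  ring

set_option linter.unusedSectionVars false

lemma L2 (c x y : Fin d) (hxy : x ≠ y) :
    u3 μ c x x x + u3 μ c y y y = 3*(u3 μ c x x y + u3 μ c x y y) := by
  set W1 : UG d := ⟨emb x y rc (-rc) rc rc,
    emb_mem hxy rc_unitary1.1 rc_unitary1.2.1 rc_unitary1.2.2.1 rc_unitary1.2.2.2⟩ with hW1def
  set W2 : UG d := ⟨emb x y (rc*Complex.I) (-rc) (rc*Complex.I) rc,
    emb_mem hxy rc_unitary2.1 rc_unitary2.2.1 rc_unitary2.2.2.1 rc_unitary2.2.2.2⟩ with hW2def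
  set f : UG d → ℝ := fun U => mon c x x x U + mon c y y y U with hfdef
  have h1 : ∫ U, f (W1 * U) ∂μ = ∫ U, f U ∂μ := integral_mul_left_eq_self f W1
  have h2 : ∫ U, f (W2 * U) ∂μ = ∫ U, f U ∂μ := integral_mul_left_eq_self f W2
  have intf : Integrable f μ := (int_mon μ c x x x).add (int_mon μ c y y y)
  have contf : Continuous f := (cont_mon c x x x).add (cont_mon c y y y)
  have fbd : ∀ V : UG d, ‖f V‖ ≤ 2 := by
    intro V
    calc ‖mon c x x x V + mon c y y y V‖ ≤ ‖mon c x x x V‖ + ‖mon c y y y V‖ := norm_add_le _ _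
      _ ≤ 1 + 1 := add_le_add (mon_bound c x x x V) (mon_bound c y y y V)
      _ = 2 := by norm_num
  have int1 : Integrable (fun U => f (W1 * U)) μ :=
    int_bdd μ (contf.comp (continuous_mul_left W1)) (fun U => fbd _)
  have int2 : Integrable (fun U => f (W2 * U)) μ :=
    int_bdd μ (contf.comp (continuous_mul_left W2)) (fun U => fbd _)
  have intsum : Integrable (fun U => f (W1 * U) + f (W2 * U)) μ := int1.add int2
  have int2f : Integrable (fun U => 2 * f U) μ := intf.const_mul 2
  have hzero : ∫ U, (f (W1*U) + f (W2*U) - 2*f U) ∂μ = 0 := by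
    rw [integral_sub intsum int2f, integral_add int1 int2,
      integral_const_mul, h1, h2]
    ring
  have hpt : (fun U : UG d => f (W1*U) + f (W2*U) - 2*f U)
      = fun U => -(3/2)*(mon c x x x U + mon c y y y U)
        + (9/2)*(mon c x x y U + mon c x y y U) := by
    funext U
    have hW1x : ((W1*U : UG d) : Matrix (Fin d) (Fin d) ℂ) x c
        = rc * (U : Matrix (Fin d) (Fin d) ℂ) x c + (-rc) * (U : Matrix (Fin d) (Fin d) ℂ) y c :=
      emb_mul_apply_x hxy _ _ _ _ _ _
    have hW1y : ((W1*U : UG d) : Matrix (Fin d) (Fin d) ℂ) y c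
        = rc * (U : Matrix (Fin d) (Fin d) ℂ) x c + rc * (U : Matrix (Fin d) (Fin d) ℂ) y c :=
      emb_mul_apply_y hxy _ _ _ _ _ _
    have hW2x : ((W2*U : UG d) : Matrix (Fin d) (Fin d) ℂ) x c
        = (rc*Complex.I) * (U : Matrix (Fin d) (Fin d) ℂ) x c
          + (-rc) * (U : Matrix (Fin d) (Fin d) ℂ) y c :=
      emb_mul_apply_x hxy _ _ _ _ _ _
    have hW2y : ((W2*U : UG d) : Matrix (Fin d) (Fin d) ℂ) y c
        = (rc*Complex.I) * (U : Matrix (Fin d) (Fin d) ℂ) x c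
          + rc * (U : Matrix (Fin d) (Fin d) ℂ) y c :=
      emb_mul_apply_y hxy _ _ _ _ _ _
    simp only [hfdef, mon, A, hW1x, hW1y, hW2x, hW2y]
    have := key2 ((U : Matrix (Fin d) (Fin d) ℂ) x c) ((U : Matrix (Fin d) (Fin d) ℂ) y c)
    linear_combination this
  rw [hpt] at hzero
  have heval : ∫ U, (-(3/2)*(mon c x x x U + mon c y y y U)
      + (9/2)*(mon c x x y U + mon c x y y U)) ∂μ
      = -(3/2)*(u3 μ c x x x + u3 μ c y y y) + (9/2)*(u3 μ c x x y + u3 μ c x y y) := by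
    have ia : Integrable (fun U => mon c x x x U + mon c y y y U) μ :=
      (int_mon μ c x x x).add (int_mon μ c y y y)
    have ib : Integrable (fun U => mon c x x y U + mon c x y y U) μ :=
      (int_mon μ c x x y).add (int_mon μ c x y y)
    have ia' : Integrable (fun U => -(3/2)*(mon c x x x U + mon c y y y U)) μ := ia.const_mul _
    have ib' : Integrable (fun U => (9/2)*(mon c x x y U + mon c x y y U)) μ := ib.const_mul _
    rw [integral_add ia' ib', integral_const_mul, integral_const_mul,
      integral_add (int_mon μ c x x x) (int_mon μ c y y y),
      integral_add (int_mon μ c x x y) (int_mon μ c x y y)]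
    rfl
  rw [heval] at hzero
  linarith

lemma L3 (c x y z : Fin d) (hxy : x ≠ y) (hxz : x ≠ z) (hyz : y ≠ z) :
    u3 μ c x y y + u3 μ c x z z = 4 * u3 μ c x y z := by
  set W1 : UG d := ⟨emb y z rc (-rc) rc rc,
    emb_mem hyz rc_unitary1.1 rc_unitary1.2.1 rc_unitary1.2.2.1 rc_unitary1.2.2.2⟩ with hW1def
  set W2 : UG d := ⟨emb y z (rc*Complex.I) (-rc) (rc*Complex.I) rc,
    emb_mem hyz rc_unitary2.1 rc_unitary2.2.1 rc_unitary2.2.2.1 rc_unitary2.2.2.2⟩ with hW2def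
  set f : UG d → ℝ := fun U => mon c x y z U with hfdef
  have h1 : ∫ U, f (W1 * U) ∂μ = ∫ U, f U ∂μ := integral_mul_left_eq_self f W1
  have h2 : ∫ U, f (W2 * U) ∂μ = ∫ U, f U ∂μ := integral_mul_left_eq_self f W2
  have intf : Integrable f μ := int_mon μ c x y z
  have contf : Continuous f := cont_mon c x y z
  have int1 : Integrable (fun U => f (W1 * U)) μ :=
    int_bdd μ (contf.comp (continuous_mul_left W1)) (fun U => mon_bound c x y z _)
  have int2 : Integrable (fun U => f (W2 * U)) μ :=
    int_bdd μ (contf.comp (continuous_mul_left W2)) (fun U => mon_bound c x y z _)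
  have intsum : Integrable (fun U => f (W1 * U) + f (W2 * U)) μ := int1.add int2
  have int2f : Integrable (fun U => 2 * f U) μ := intf.const_mul 2
  have hzero : ∫ U, (f (W1*U) + f (W2*U) - 2*f U) ∂μ = 0 := by
    rw [integral_sub intsum int2f, integral_add int1 int2,
      integral_const_mul, h1, h2]
    ring
  have hpt : (fun U : UG d => f (W1*U) + f (W2*U) - 2*f U)
      = fun U => (1/2)*(mon c x y y U + mon c x z z U) + (-2)*(mon c x y z U) := by
    funext U
    have hW1x : ((W1*U : UG d) : Matrix (Fin d) (Fin d) ℂ) x c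
        = (U : Matrix (Fin d) (Fin d) ℂ) x c := emb_mul_apply_other hxy hxz _ _ _ _ _ _
    have hW2x : ((W2*U : UG d) : Matrix (Fin d) (Fin d) ℂ) x c
        = (U : Matrix (Fin d) (Fin d) ℂ) x c := emb_mul_apply_other hxy hxz _ _ _ _ _ _
    have hW1y : ((W1*U : UG d) : Matrix (Fin d) (Fin d) ℂ) y c
        = rc * (U : Matrix (Fin d) (Fin d) ℂ) y c + (-rc) * (U : Matrix (Fin d) (Fin d) ℂ) z c :=
      emb_mul_apply_x hyz _ _ _ _ _ _
    have hW1z : ((W1*U : UG d) : Matrix (Fin d) (Fin d) ℂ) z c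
        = rc * (U : Matrix (Fin d) (Fin d) ℂ) y c + rc * (U : Matrix (Fin d) (Fin d) ℂ) z c :=
      emb_mul_apply_y hyz _ _ _ _ _ _
    have hW2y : ((W2*U : UG d) : Matrix (Fin d) (Fin d) ℂ) y c
        = (rc*Complex.I) * (U : Matrix (Fin d) (Fin d) ℂ) y c
          + (-rc) * (U : Matrix (Fin d) (Fin d) ℂ) z c :=
      emb_mul_apply_x hyz _ _ _ _ _ _
    have hW2z : ((W2*U : UG d) : Matrix (Fin d) (Fin d) ℂ) z c
        = (rc*Complex.I) * (U : Matrix (Fin d) (Fin d) ℂ) y c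
          + rc * (U : Matrix (Fin d) (Fin d) ℂ) z c :=
      emb_mul_apply_y hyz _ _ _ _ _ _
    simp only [hfdef, mon, A, hW1x, hW2x, hW1y, hW1z, hW2y, hW2z]
    have := key3 ((U : Matrix (Fin d) (Fin d) ℂ) y c) ((U : Matrix (Fin d) (Fin d) ℂ) z c)
    linear_combination (Complex.normSq ((U : Matrix (Fin d) (Fin d) ℂ) x c)) * this
  rw [hpt] at hzero
  have heval : ∫ U, ((1/2)*(mon c x y y U + mon c x z z U) + (-2)*(mon c x y z U)) ∂μ
      = (1/2)*(u3 μ c x y y + u3 μ c x z z) + (-2)*(u3 μ c x y z) := by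
    have ia : Integrable (fun U => mon c x y y U + mon c x z z U) μ :=
      (int_mon μ c x y y).add (int_mon μ c x z z)
    have ia' : Integrable (fun U => (1/2)*(mon c x y y U + mon c x z z U)) μ := ia.const_mul _
    have ib' : Integrable (fun U => (-2)*(mon c x y z U)) μ := (int_mon μ c x y z).const_mul _
    rw [integral_add ia' ib', integral_const_mul, integral_const_mul,
      integral_add (int_mon μ c x y y) (int_mon μ c x z z)]
    rfl
  rw [heval] at hzero
  linarith

lemma A_bound (c x : Fin d) (U : UG d) : ‖A c x U‖ ≤ 1 := by
  rw [Real.norm_eq_abs, abs_of_nonneg (A_nonneg c x U)]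
  exact A_le_one c x U

lemma int_A (c x : Fin d) : Integrable (A c x) μ :=
  int_bdd μ (contA c x) (A_bound c x)

lemma A2_bound (c x y : Fin d) (U : UG d) : ‖A c x U * A c y U‖ ≤ 1 := by
  have hx0 := A_nonneg c x U; have hx1 := A_le_one c x U
  have hy0 := A_nonneg c y U; have hy1 := A_le_one c y U
  rw [Real.norm_eq_abs, abs_of_nonneg (by positivity)]
  have h : A c x U * A c y U ≤ 1 * 1 := by gcongr
  linarith

lemma int_A2 (c x y : Fin d) : Integrable (fun U => A c x U * A c y U) μ :=
  int_bdd μ ((contA c x).mul (contA c y)) (A2_bound c x y)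

lemma sum_u3 (c : Fin d) : ∑ x, ∑ y, ∑ z, u3 μ c x y z = 1 := by
  have hz : ∀ x y : Fin d, ∑ z, u3 μ c x y z = ∫ U, A c x U * A c y U ∂μ := by
    intro x y
    simp only [u3]
    rw [← integral_finset_sum _ (fun z _ => int_mon μ c x y z)]
    congr 1
    funext U
    simp only [mon]
    rw [← Finset.mul_sum, colsum, mul_one]
  have hy : ∀ x : Fin d, ∑ y, ∫ U, A c x U * A c y U ∂μ = ∫ U, A c x U ∂μ := by
    intro x
    rw [← integral_finset_sum _ (fun y _ => int_A2 μ c x y)]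
    congr 1
    funext U
    rw [← Finset.mul_sum, colsum, mul_one]
  have hx : ∑ x, ∫ U, A c x U ∂μ = 1 := by
    rw [← integral_finset_sum _ (fun x _ => int_A μ c x)]
    have : (fun U : UG d => ∑ x, A c x U) = fun _ => (1:ℝ) := funext (colsum c)
    rw [this]
    simp
  calc ∑ x, ∑ y, ∑ z, u3 μ c x y z
      = ∑ x, ∑ y, ∫ U, A c x U * A c y U ∂μ :=
        Finset.sum_congr rfl fun x _ => Finset.sum_congr rfl fun y _ => hz x y
    _ = ∑ x, ∫ U, A c x U ∂μ := Finset.sum_congr rfl fun x _ => hy x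
    _ = 1 := hx

lemma main_S (c : Fin d) :
    ∑ x, u3 μ c x x x = 6 / (((d : ℝ) + 1) * ((d : ℝ) + 2)) := by
  set S : ℝ := ∑ x, u3 μ c x x x with hS
  set P : ℝ := ∑ x, ∑ y, u3 μ c x y y with hP
  set T : ℝ := ∑ x, ∑ y, u3 μ c x x y with hT
  have hsym1 : ∀ a b : Fin d, u3 μ c a b a = u3 μ c a a b := fun a b => u3_rot μ c a b a
  have hsym2 : ∀ a b : Fin d, u3 μ c a a b = u3 μ c b a a := fun a b => u3_rot μ c a a b
  have hTP : T = P := by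
    rw [hT, Finset.sum_comm]
    exact Finset.sum_congr rfl fun i _ => Finset.sum_congr rfl fun j _ => hsym2 j i
  -- Equation 1
  have hrow1 : ∀ x : Fin d,
      ∑ y, (u3 μ c x x x + u3 μ c y y y - 3*(u3 μ c x x y + u3 μ c x y y))
        = -4 * u3 μ c x x x := by
    intro x
    rw [Finset.sum_eq_single_of_mem x (Finset.mem_univ x)
      (fun y _ hyx => by have := L2 μ c x y (Ne.symm hyx); linarith)]
    ring
  have he1a : ∑ x, ∑ y, (u3 μ c x x x + u3 μ c y y y - 3*(u3 μ c x x y + u3 μ c x y y))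
      = -4 * S := by
    rw [Finset.sum_congr rfl (fun x _ => hrow1 x), ← Finset.mul_sum]
  have he1b : ∑ x, ∑ y, (u3 μ c x x x + u3 μ c y y y - 3*(u3 μ c x x y + u3 μ c x y y))
      = 2*(d:ℝ)*S - 3*(T + P) := by
    have inner : ∀ x : Fin d,
        ∑ y, (u3 μ c x x x + u3 μ c y y y - 3*(u3 μ c x x y + u3 μ c x y y))
          = (d:ℝ) * u3 μ c x x x + S - 3*((∑ y, u3 μ c x x y) + (∑ y, u3 μ c x y y)) := by
      intro x
      simp only [Finset.sum_sub_distrib, Finset.sum_add_distrib, Finset.sum_const,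
        Finset.card_univ, Fintype.card_fin, nsmul_eq_mul, ← Finset.mul_sum]
      try rw [hS]
      try ring
    rw [Finset.sum_congr rfl (fun x _ => inner x)]
    simp only [Finset.sum_sub_distrib, Finset.sum_add_distrib, Finset.sum_const,
      Finset.card_univ, Fintype.card_fin, nsmul_eq_mul, ← Finset.mul_sum]
    rw [← hS, ← hT, ← hP]
    ring
  have e1 : 6 * P = 2*(d:ℝ)*S + 4*S := by
    have := he1a.symm.trans he1b
    rw [hTP] at this
    linarith
  -- Equation 2
  set F : Fin d → Fin d → Fin d → ℝ :=
    fun x y z => u3 μ c x y y + u3 μ c x z z - 4*u3 μ c x y z with hF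
  have hsupp : ∀ x y z : Fin d, x ≠ y → x ≠ z → y ≠ z → F x y z = 0 := by
    intro x y z h1 h2 h3
    have := L3 μ c x y z h1 h2 h3
    simp only [hF]
    linarith
  have hrow2 : ∀ x y : Fin d, y ≠ x → ∑ z, F x y z = F x y x + F x y y := by
    intro x y hyx
    rw [← Finset.add_sum_erase _ _ (Finset.mem_univ x)]
    congr 1
    rw [← Finset.add_sum_erase _ _ (Finset.mem_erase.mpr ⟨hyx, Finset.mem_univ y⟩)]
    have hrest : ∑ z ∈ (Finset.univ.erase x).erase y, F x y z = 0 :=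
      Finset.sum_eq_zero fun z hz => by
        rcases Finset.mem_erase.mp hz with ⟨hzy, hz2⟩
        rcases Finset.mem_erase.mp hz2 with ⟨hzx, _⟩
        exact hsupp x y z (Ne.symm hyx) (Ne.symm hzx) (Ne.symm hzy)
    rw [hrest, add_zero]
  have G2 : ∀ x : Fin d, ∑ y, ∑ z, F x y z
      = (∑ z, F x x z) + ((∑ y, (F x y x + F x y y)) - (F x x x + F x x x)) := by
    intro x
    rw [← Finset.add_sum_erase _ (fun y => ∑ z, F x y z) (Finset.mem_univ x)]
    rw [Finset.sum_congr rfl (fun y hy => hrow2 x y (Finset.mem_erase.mp hy).1)]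
    rw [Finset.sum_erase_eq_sub (Finset.mem_univ x)]
  -- evaluate both sides of G2 summed over x
  have hval : ∀ x : Fin d,
      (∑ z, F x x z) + ((∑ y, (F x y x + F x y y)) - (F x x x + F x x x))
      = (2*(d:ℝ)+4) * u3 μ c x x x - 8*(∑ y, u3 μ c x x y) := by
    intro x
    have hxyx : ∀ y, u3 μ c x y x = u3 μ c x x y := fun y => hsym1 x y
    simp only [hF, hxyx]
    simp only [Finset.sum_sub_distrib, Finset.sum_add_distrib, Finset.sum_const,
      Finset.card_univ, Fintype.card_fin, nsmul_eq_mul, ← Finset.mul_sum]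
    ring
  have hdir : ∀ x : Fin d, ∑ y, ∑ z, F x y z
      = 2*(d:ℝ)*(∑ y, u3 μ c x y y) - 4*(∑ y, ∑ z, u3 μ c x y z) := by
    intro x
    simp only [hF]
    simp only [Finset.sum_sub_distrib, Finset.sum_add_distrib, Finset.sum_const,
      Finset.card_univ, Fintype.card_fin, nsmul_eq_mul, ← Finset.mul_sum]
    ring
  have e2 : 2*(d:ℝ)*P - 4 = (2*(d:ℝ)+4)*S - 8*P := by
    have hQ := sum_u3 μ c
    have hcomb : ∑ x, (2*(d:ℝ)*(∑ y, u3 μ c x y y) - 4*(∑ y, ∑ z, u3 μ c x y z))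
        = ∑ x, ((2*(d:ℝ)+4) * u3 μ c x x x - 8*(∑ y, u3 μ c x x y)) := by
      refine Finset.sum_congr rfl fun x _ => ?_
      rw [← hdir x, G2 x, hval x]
    simp only [Finset.sum_sub_distrib, ← Finset.mul_sum] at hcomb
    rw [hQ, ← hP, ← hS, ← hT] at hcomb
    rw [hTP] at hcomb
    linarith
  -- solve
  have hd1 : ((d:ℝ) + 1) ≠ 0 := by positivity
  have hd2 : ((d:ℝ) + 2) ≠ 0 := by positivity
  have hPval : (2*(d:ℝ) + 2) * P = 4 := by linarith
  have hfin : 12 = (2*(d:ℝ)+4) * ((d:ℝ)+1) * S := by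
    have h3 : P * ((d:ℝ)+1) = 2 := by nlinarith
    nlinarith [e1, h3]
  field_simp
  linear_combination (-(1:ℝ)/2) * hfin

end Measure

end PTaux

theorem PTaux_bridge (d : ℕ) (hd : 1 ≤ d)
    (μ : Measure (Matrix.unitaryGroup (Fin d) ℂ))
    [μ.IsHaarMeasure] [IsProbabilityMeasure μ] :
    ∫ U : Matrix.unitaryGroup (Fin d) ℂ,
        ∑ x : Fin d,
          ((‖(U : Matrix (Fin d) (Fin d) ℂ) x ⟨0, hd⟩‖) ^ 2) ^ 3 ∂μ =
      6 / (((d : ℝ) + 1) * ((d : ℝ) + 2)) := by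
  have hmain := PTaux.main_S μ (⟨0, hd⟩ : Fin d)
  have hfun : (fun U : PTaux.UG d => ∑ x : Fin d,
      ((‖(U : Matrix (Fin d) (Fin d) ℂ) x ⟨0, hd⟩‖) ^ 2) ^ 3)
      = fun U => ∑ x : Fin d, PTaux.mon ⟨0, hd⟩ x x x U := by
    funext U
    refine Finset.sum_congr rfl fun x _ => ?_
    rw [Complex.sq_norm]
    simp only [PTaux.mon, PTaux.A]
    ring
  rw [hfun, integral_finset_sum _ (fun x _ => PTaux.int_mon μ ⟨0, hd⟩ x x x)]
  exact hmain

/-- For the Haar probability measure `μ` on `U(d)` and the Porter–Thomas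
distribution `p_U(x) = |U_{x,0}|²`, the Haar-averaged third moment satisfies
`∫ ∑_x p_U(x)³ dμ(U) = 6/((d+1)(d+2))`. -/
theorem haar_average_third_moment (d : ℕ) (hd : 1 ≤ d)
    (μ : Measure (Matrix.unitaryGroup (Fin d) ℂ))
    [μ.IsHaarMeasure] [IsProbabilityMeasure μ] :
    ∫ U : Matrix.unitaryGroup (Fin d) ℂ,
        ∑ x : Fin d,
          ((‖(U : Matrix (Fin d) (Fin d) ℂ) x ⟨0, hd⟩‖) ^ 2) ^ 3 ∂μ =
      6 / (((d : ℝ) + 1) * ((d : ℝ) + 2)) := by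
  exact PTaux_bridge d hd μ
end

section
/- Let T ≥ 1 and d ≥ 1 be integers with T² ≤ d. For a permutation π of {1,…,T}, let c(π) denote the number of cycles of π (counting fixed points). Then ∑_{π ∈ S_T, π ≠ id} d^{c(π)−T} ≤ 2T²/d. -/
open Equiv Equiv.Perm Finset in
private def cc {α : Type*} [Fintype α] [DecidableEq α] (f : Equiv.Perm α) : ℕ :=
  Multiset.card f.cycleType + (Fintype.card α - f.support.card)

section Aux

open Equiv Equiv.Perm Finset

variable {α : Type*} [Fintype α] [DecidableEq α]

private lemma isCycle_swap_mul_cycle {c : Perm α} (hc : c.IsCycle) {a b : α}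
    (hab : a ≠ b) (ha : a ∉ c.support) (hb : b ∈ c.support) :
    (swap a b * c).IsCycle ∧ (swap a b * c).support = insert a c.support := by
  set σ := swap a b * c with hσ
  have hca : c a = a := notMem_support.mp ha
  have hcb : c b ≠ b := mem_support.mp hb
  have hσa : σ a = b := by
    simp [hσ, mul_apply, hca, swap_apply_left]
  have key : ∀ y ∈ c.support, Perm.SameCycle σ a y := by
    intro y hy
    have hcy : c y ≠ y := mem_support.mp hy
    obtain ⟨i, hi⟩ := hc.exists_pow_eq hcb hcy
    have hP : ∃ i : ℕ, (c ^ i) b = y := ⟨i, hi⟩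
    set i0 := Nat.find hP with hi0
    have hspec : (c ^ i0) b = y := Nat.find_spec hP
    have chain : ∀ j, j ≤ i0 → (σ ^ (j + 1)) a = (c ^ j) b := by
      intro j
      induction j with
      | zero => intro _; simpa using hσa
      | succ j ih =>
        intro hj
        have hj' : j ≤ i0 := by omega
        have h1 : (σ ^ (j + 2)) a = σ ((σ ^ (j + 1)) a) := by
          rw [pow_succ']; rfl
        rw [h1, ih hj']
        have hmem : (c ^ (j + 1)) b ∈ c.support := pow_apply_mem_support.mpr hb
        have hne_a : (c ^ (j + 1)) b ≠ a := fun h => ha (h ▸ hmem)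
        have hne_b : (c ^ (j + 1)) b ≠ b := by
          intro h
          have h2 : (c ^ (i0 - (j + 1))) b = y := by
            have : (c ^ (i0 - (j + 1))) ((c ^ (j + 1)) b) = (c ^ i0) b := by
              rw [← Perm.mul_apply, ← pow_add]
              congr 2
              omega
            rw [h] at this
            rw [this, hspec]
          exact Nat.find_min hP (by omega) h2
        show swap a b (c ((c ^ j) b)) = (c ^ (j+1)) b
        rw [show c ((c ^ j) b) = (c ^ (j+1)) b by rw [pow_succ', Perm.mul_apply]]
        exact swap_apply_of_ne_of_ne hne_a hne_b
    exact ⟨((i0 : ℤ) + 1), by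
      have := chain i0 le_rfl
      rw [hspec] at this
      rw [← this]
      norm_cast⟩
  have hsupp : ∀ y, σ y ≠ y → y = a ∨ y ∈ c.support := by
    intro y hy
    by_cases hya : y = a
    · exact Or.inl hya
    by_cases hyc : y ∈ c.support
    · exact Or.inr hyc
    · exfalso
      have hcy : c y = y := notMem_support.mp hyc
      have hyb : y ≠ b := fun h => hyc (h ▸ hb)
      apply hy
      simp [hσ, mul_apply, hcy, swap_apply_of_ne_of_ne hya hyb]
  constructor
  · refine ⟨a, by rw [hσa]; exact hab.symm, fun y hy => ?_⟩
    rcases hsupp y hy with h | h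
    · exact h ▸ Perm.SameCycle.refl σ a
    · exact key y h
  · ext y
    simp only [Perm.mem_support, Finset.mem_insert]
    constructor
    · intro hy
      rcases hsupp y hy with h | h
      · exact Or.inl h
      · exact Or.inr (mem_support.mp h)
    · rintro (rfl | h)
      · rw [hσa]; exact hab.symm
      · have hyc : c y ≠ y := h
        have hmem : c y ∈ c.support := apply_mem_support.mpr (mem_support.mpr h)
        have hne_a : c y ≠ a := fun h' => ha (h' ▸ hmem)
        by_cases hcyb : c y = b
        · rw [show σ y = a by simp [hσ, mul_apply, hcyb, swap_apply_right]]
          intro h'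
          exact ha (h' ▸ mem_support.mpr hyc)
        · rw [show σ y = c y by simp [hσ, mul_apply, swap_apply_of_ne_of_ne hne_a hcyb]]
          exact hyc

private lemma cc_swap_mul {f : Perm α} {a b : α} (hab : a ≠ b) (ha : f a = a) :
    cc (swap a b * f) + 1 = cc f := by
  have haf : a ∉ f.support := notMem_support.mpr ha
  by_cases hb : f b = b
  · -- disjoint case: swap a b disjoint from f
    have hd : Perm.Disjoint (swap a b) f := by
      intro x
      by_cases hx : x = a
      · exact Or.inr (hx ▸ ha)
      by_cases hx' : x = b
      · exact Or.inr (hx' ▸ hb)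
      · exact Or.inl (swap_apply_of_ne_of_ne hx hx')
    have hct : (swap a b * f).cycleType = {2} + f.cycleType := by
      rw [hd.cycleType_mul, (isCycle_swap hab).cycleType, support_swap hab]
      congr 1
      simp [hab]
    have hbf : b ∉ f.support := notMem_support.mpr hb
    have hs : (swap a b * f).support = {a, b} ∪ f.support := by
      rw [hd.support_mul, support_swap hab]
    have hdisj : _root_.Disjoint ({a, b} : Finset α) f.support := by
      rw [Finset.disjoint_left]
      rintro x hx
      simp only [Finset.mem_insert, Finset.mem_singleton] at hx
      rcases hx with rfl | rfl
      · exact haf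
      · exact hbf
    have hcard : (swap a b * f).support.card = f.support.card + 2 := by
      rw [hs, Finset.card_union_of_disjoint hdisj,
        Finset.card_insert_of_notMem (by simp [hab]), Finset.card_singleton]
      omega
    have hle : f.support.card + 2 ≤ Fintype.card α := by
      rw [← hcard]
      exact (swap a b * f).support.card_le_univ.trans_eq Finset.card_univ
    unfold cc
    rw [hct, hcard]
    simp only [Multiset.card_add, Multiset.card_singleton]
    omega
  · -- merge case
    have hbf : b ∈ f.support := mem_support.mpr hb
    have hex : ∃ g c : Perm α, c.IsCycle ∧ Perm.Disjoint g c ∧ b ∈ c.support ∧ g * c = f := by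
      refine ⟨f * (f.cycleOf b)⁻¹, f.cycleOf b, isCycle_cycleOf f hb,
        disjoint_mul_inv_of_mem_cycleFactorsFinset
          (cycleOf_mem_cycleFactorsFinset_iff.mpr hbf), ?_, by group⟩
      rw [mem_support, cycleOf_apply_self]
      exact hb
    obtain ⟨g, c, hc, hd, hbc, rfl⟩ := hex
    have hsupp_f : (g * c).support = g.support ∪ c.support := hd.support_mul
    have hag : a ∉ g.support := fun h => haf (hsupp_f ▸ Finset.mem_union_left _ h)
    have hac : a ∉ c.support := fun h => haf (hsupp_f ▸ Finset.mem_union_right _ h)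
    have hdsw : Perm.Disjoint (swap a b) g := by
      intro x
      by_cases hx : x = a
      · exact Or.inr (hx ▸ notMem_support.mp hag)
      by_cases hx' : x = b
      · subst hx'
        rcases hd x with h | h
        · exact Or.inr h
        · exact absurd h (mem_support.mp hbc)
      · exact Or.inl (swap_apply_of_ne_of_ne hx hx')
    obtain ⟨hσc_cycle, hσc_supp⟩ := isCycle_swap_mul_cycle hc hab hac hbc
    have hre : swap a b * (g * c) = g * (swap a b * c) := by
      rw [← mul_assoc, hdsw.commute.eq, mul_assoc]
    have hdg : Perm.Disjoint g (swap a b * c) := by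
      intro x
      by_cases hx : x ∈ (swap a b * c).support
      · rw [hσc_supp] at hx
        rcases Finset.mem_insert.mp hx with rfl | hx'
        · exact Or.inl (notMem_support.mp hag)
        · rcases hd x with h | h
          · exact Or.inl h
          · exact absurd (mem_support.mp hx') (not_not.mpr h)
      · exact Or.inr (notMem_support.mp hx)
    have hcard_c : (swap a b * c).support.card = c.support.card + 1 := by
      rw [hσc_supp, Finset.card_insert_of_notMem hac]
    have hct1 : (swap a b * (g * c)).cycleType = g.cycleType + {c.support.card + 1} := by
      rw [hre, hdg.cycleType_mul, hσc_cycle.cycleType, hcard_c]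
    have hct2 : (g * c).cycleType = g.cycleType + {c.support.card} := by
      rw [hd.cycleType_mul, hc.cycleType]
    have hs1 : (swap a b * (g * c)).support = insert a ((g * c).support) := by
      rw [hre, hdg.support_mul, hσc_supp, hsupp_f]
      ext x
      simp only [Finset.mem_union, Finset.mem_insert]
      tauto
    have hcard1 : (swap a b * (g * c)).support.card = (g * c).support.card + 1 := by
      rw [hs1, Finset.card_insert_of_notMem haf]
    have hle : (g * c).support.card + 1 ≤ Fintype.card α := by
      rw [← hcard1]
      exact (swap a b * (g * c)).support.card_le_univ.trans_eq Finset.card_univ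
    unfold cc
    rw [hct1, hct2, hcard1]
    simp only [Multiset.card_add, Multiset.card_singleton]
    omega

private lemma decomposeFin_zero {n : ℕ} (e : Perm (Fin n)) :
    Equiv.Perm.decomposeFin.symm (0, e) = e.extendDomain (finSuccAboveEquiv 0) := by
  ext x
  refine Fin.cases ?_ (fun i => ?_) x
  · rw [Equiv.Perm.decomposeFin_symm_apply_zero,
      Perm.extendDomain_apply_not_subtype _ _ (by simp)]
  · rw [Equiv.Perm.decomposeFin_symm_apply_succ, swap_self, Equiv.refl_apply]
    have h1 : ((finSuccAboveEquiv (0 : Fin (n+1))) i : Fin (n + 1)) = i.succ := by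
      simp [finSuccAboveEquiv_apply, Fin.zero_succAbove]
    have h2 : ((finSuccAboveEquiv (0 : Fin (n+1))) (e i) : Fin (n + 1)) = (e i).succ := by
      simp [finSuccAboveEquiv_apply, Fin.zero_succAbove]
    rw [show (i.succ : Fin (n+1)) = ((finSuccAboveEquiv (0 : Fin (n+1))) i : Fin (n+1)) from h1.symm,
      Perm.extendDomain_apply_image]
    simp [h2]

private lemma cc_decomposeFin_zero {n : ℕ} (e : Perm (Fin n)) :
    cc (Equiv.Perm.decomposeFin.symm (0, e)) = cc e + 1 := by
  rw [decomposeFin_zero]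
  unfold cc
  rw [Equiv.Perm.cycleType_extendDomain, Equiv.Perm.card_support_extend_domain]
  have : e.support.card ≤ n := le_trans (Finset.card_le_card (Finset.subset_univ _))
    (by simp [Finset.card_univ])
  simp only [Fintype.card_fin]
  omega

private lemma cc_decomposeFin {n : ℕ} (p : Fin (n + 1)) (e : Perm (Fin n)) :
    cc (Equiv.Perm.decomposeFin.symm (p, e)) = cc e + if p = 0 then 1 else 0 := by
  by_cases hp : p = 0
  · subst hp; simp [cc_decomposeFin_zero]
  · have hsplit : Equiv.Perm.decomposeFin.symm (p, e)
        = swap 0 p * Equiv.Perm.decomposeFin.symm (0, e) := by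
      ext x
      refine Fin.cases ?_ (fun i => ?_) x
      · rw [Equiv.Perm.decomposeFin_symm_apply_zero, Perm.mul_apply,
          Equiv.Perm.decomposeFin_symm_apply_zero, swap_apply_left]
      · rw [Equiv.Perm.decomposeFin_symm_apply_succ, Perm.mul_apply,
          Equiv.Perm.decomposeFin_symm_apply_succ, swap_self, Equiv.refl_apply]
    rw [hsplit, if_neg hp, add_zero]
    have h := cc_swap_mul (f := Equiv.Perm.decomposeFin.symm (0, e)) (Ne.symm hp)
      (Equiv.Perm.decomposeFin_symm_apply_zero 0 e)
    rw [cc_decomposeFin_zero] at h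
    omega

private lemma sum_pow_cc (d : ℝ) (n : ℕ) :
    ∑ π : Perm (Fin n), d ^ cc π = ∏ i ∈ Finset.range n, (d + i) := by
  induction n with
  | zero =>
    rw [Finset.range_zero, Finset.prod_empty]
    rw [show (Finset.univ : Finset (Perm (Fin 0))) = {1} from Finset.eq_singleton_iff_unique_mem.mpr
      ⟨Finset.mem_univ _, fun x _ => Subsingleton.elim x 1⟩]
    simp [cc]
  | succ n ih =>
    rw [← Equiv.sum_comp (Equiv.Perm.decomposeFin (n := n)).symm (fun π => d ^ cc π),
      Fintype.sum_prod_type]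
    simp only [cc_decomposeFin]
    rw [Fin.sum_univ_succ]
    simp only [if_pos rfl, Fin.succ_ne_zero, if_neg, if_true, if_false, add_zero, pow_succ]
    rw [Finset.prod_range_succ, ← ih]
    rw [Finset.sum_const, Finset.card_univ, Fintype.card_fin, nsmul_eq_mul, ← Finset.sum_mul]
    ring


end Aux

/-- The number of cycles of a permutation, counting fixed points as cycles of length 1:
the number of nontrivial cycles plus the number of fixed points. -/
def cycleCount {T : ℕ} (π : Equiv.Perm (Fin T)) : ℕ :=
  π.cycleType.card + (Finset.univ.filter fun t => π t = t).card

section Aux2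

open Equiv Equiv.Perm Finset

private lemma cycleCount_eq_cc {T : ℕ} (π : Perm (Fin T)) : cycleCount π = cc π := by
  unfold cycleCount cc
  congr 1
  have h : (Finset.univ.filter fun t => π t = t) = π.supportᶜ := by
    ext t
    simp [Equiv.Perm.mem_support]
  rw [h, Finset.card_compl, Fintype.card_fin]

private lemma cc_one (T : ℕ) : cc (1 : Perm (Fin T)) = T := by
  unfold cc
  simp [Equiv.Perm.cycleType_one]

private lemma prod_bound (d : ℝ) (T : ℕ) (hd : 1 ≤ d) (hTd : (T : ℝ) ^ 2 ≤ d) :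
    ∀ n, n ≤ T → ∏ i ∈ Finset.range n, (d + i) ≤ d ^ n * (1 + n ^ 2 / d) := by
  have hd0 : (0 : ℝ) < d := lt_of_lt_of_le one_pos hd
  intro n
  induction n with
  | zero => simp
  | succ n ih =>
    intro hn
    have hn' : n ≤ T := by omega
    have hcast : ((n : ℝ) + 1) ^ 2 ≤ d := by
      calc ((n : ℝ) + 1) ^ 2 ≤ (T : ℝ) ^ 2 := by
            have : (n : ℝ) + 1 ≤ T := by exact_mod_cast hn
            nlinarith [Nat.cast_nonneg (α := ℝ) n]
        _ ≤ d := hTd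
    have h3 : (n : ℝ) ^ 3 ≤ ((n : ℝ) + 1) * d := by
      nlinarith [Nat.cast_nonneg (α := ℝ) n]
    have hP : (0:ℝ) ≤ ∏ i ∈ Finset.range n, (d + i) := by
      apply Finset.prod_nonneg
      intro i _
      positivity
    rw [Finset.prod_range_succ]
    calc (∏ i ∈ Finset.range n, (d + i)) * (d + n)
        ≤ d ^ n * (1 + (n:ℝ) ^ 2 / d) * (d + n) := by
          apply mul_le_mul_of_nonneg_right (ih hn')
          positivity
      _ ≤ d ^ (n+1) * (1 + ((n:ℕ)+1 : ℕ) ^ 2 / d) := by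
          push_cast
          have key : (1 + (n:ℝ) ^ 2 / d) * (d + n) ≤ d * (1 + ((n:ℝ) + 1) ^ 2 / d) := by
            have e1 : (1 + (n:ℝ) ^ 2 / d) * (d + n) = d + n + n ^ 2 + n ^ 3 / d := by
              field_simp; ring
            have e2 : d * (1 + ((n:ℝ) + 1) ^ 2 / d) = d + ((n:ℝ) + 1) ^ 2 := by
              field_simp
            have e3 : (n:ℝ) ^ 3 / d ≤ (n:ℝ) + 1 := by
              rw [div_le_iff₀ hd0]; nlinarith
            rw [e1, e2]; nlinarith
          calc d ^ n * (1 + (n:ℝ) ^ 2 / d) * (d + n)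
              = d ^ n * ((1 + (n:ℝ) ^ 2 / d) * (d + n)) := by ring
            _ ≤ d ^ n * (d * (1 + ((n:ℝ) + 1) ^ 2 / d)) := by
                apply mul_le_mul_of_nonneg_left key (by positivity)
            _ = d ^ (n + 1) * (1 + ((n:ℝ) + 1) ^ 2 / d) := by ring

end Aux2

/-- For integers `T ≥ 1` and `d ≥ 1` with `T² ≤ d`,
`∑_{π ∈ S_T, π ≠ id} d^{c(π) - T} ≤ 2 T² / d`. -/
theorem sum_nonidentity_pow_cycleCount_le (T d : ℕ) (hT : 1 ≤ T) (hd : 1 ≤ d)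
    (hTd : T ^ 2 ≤ d) :
    ∑ π ∈ Finset.univ.erase (1 : Equiv.Perm (Fin T)),
        (d : ℝ) ^ cycleCount π / (d : ℝ) ^ T ≤ 2 * (T : ℝ) ^ 2 / d := by
  have hd0 : (0 : ℝ) < d := by exact_mod_cast hd
  have hdT : (0 : ℝ) < (d : ℝ) ^ T := by positivity
  have hd1 : (1 : ℝ) ≤ d := by exact_mod_cast hd
  have hTd' : (T : ℝ) ^ 2 ≤ d := by exact_mod_cast hTd
  have hsum : ∑ π ∈ Finset.univ.erase (1 : Equiv.Perm (Fin T)), (d : ℝ) ^ cycleCount π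
      = (∏ i ∈ Finset.range T, ((d : ℝ) + i)) - (d : ℝ) ^ T := by
    rw [Finset.sum_erase_eq_sub (Finset.mem_univ _)]
    congr 1
    · rw [← sum_pow_cc]
      exact Finset.sum_congr rfl fun π _ => by rw [cycleCount_eq_cc]
    · rw [cycleCount_eq_cc, cc_one]
  rw [← Finset.sum_div, hsum]
  have hbound := prod_bound (d : ℝ) T hd1 hTd' T le_rfl
  rw [div_le_div_iff₀ hdT hd0]
  have h1 : (∏ i ∈ Finset.range T, ((d : ℝ) + i)) - (d : ℝ) ^ T ≤ (d:ℝ)^T * ((T:ℝ)^2 / d) := by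
    have : (d:ℝ)^T * (1 + (T:ℝ)^2/d) - (d:ℝ)^T = (d:ℝ)^T * ((T:ℝ)^2/d) := by ring
    linarith
  have hc : (T:ℝ)^2 / d * d = (T:ℝ)^2 := div_mul_cancel₀ _ (ne_of_gt hd0)
  calc ((∏ i ∈ Finset.range T, ((d : ℝ) + i)) - (d : ℝ) ^ T) * d
      ≤ (d:ℝ)^T * ((T:ℝ)^2 / d) * d := by
        apply mul_le_mul_of_nonneg_right h1 (le_of_lt hd0)
    _ = (d:ℝ)^T * ((T:ℝ)^2 / d * d) := by ring
    _ = (d:ℝ)^T * (T:ℝ)^2 := by rw [hc]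
    _ ≤ 2 * (T:ℝ)^2 * (d:ℝ)^T := by nlinarith [mul_nonneg (le_of_lt hdT) (sq_nonneg (T:ℝ))]
end
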